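/- arXiv:2112.07206 — 6 statements merged into one kernel-verified Lean document; each statement's English description precedes it below -/
import Mathlib

section
/- Let G be a locally compact second-countable group acting jointly measurably on a measurable space X and continuously on a nonempty compact metrizable space Y. Let μ be a Borel probability measure on G, let ν be a μ-stationary SAT probability measure on X, and let p : X → Y be a measurable map that is G-equivariant (p(g • x) = g • p(x) for all g ∈ G and x ∈ X) and such that the pushforward p_*ν is the unique μ-stationary Borel probability measure on Y. Then every measurable map β from X to the space P(Y) of Borel probability measures on Y (with the topology of weak convergence and its Borel σ-algebra) that is G-equivariant, in the sense that for every g ∈ G one has β(g • x) = g_*(β(x)) for ν-almost every x ∈ X, satisfies β(x) = δ_{p(x)} (the Dirac measure at p(x)) for ν-almost every x ∈ X. -/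
open MeasureTheory

/-- Convolution of a measure on the acting group with a measure on the space:
the pushforward of the product measure under the action map. -/
noncomputable def convAct {G X : Type*} [MeasurableSpace G] [MeasurableSpace X] [SMul G X]
    (μ : Measure G) (ν : Measure X) : Measure X :=
  Measure.map (fun p : G × X => p.1 • p.2) (μ.prod ν)

/-- Total variation distance between two (finite) measures, as the supremum over
measurable sets of the absolute difference of the measures. -/
noncomputable def tvDist {X : Type*} [MeasurableSpace X] (ν₁ ν₂ : Measure X) : ℝ :=
  ⨆ A : {A : Set X // MeasurableSet A}, |(ν₁ A.1).toReal - (ν₂ A.1).toReal|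

/-- A probability measure `ν` on a `G`-space `X` is strongly approximately transitive (SAT)
if every probability measure absolutely continuous with respect to `ν` can be approximated
in total variation by convolutions `μ ∗ ν` with `μ` a probability measure on `G`. -/
def IsSAT (G : Type*) {X : Type*} [MeasurableSpace G] [MeasurableSpace X] [SMul G X]
    (ν : Measure X) : Prop :=
  ∀ lam : Measure X, IsProbabilityMeasure lam → lam ≪ ν →
    ∀ ε : ℝ, 0 < ε → ∃ μ : Measure G, IsProbabilityMeasure μ ∧ tvDist lam (convAct μ ν) < ε

open Set Filter TopologicalSpace Metric
open scoped ENNReal NNReal Topology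

section Eval

variable {Y : Type*} [TopologicalSpace Y] [TopologicalSpace.MetrizableSpace Y]
  [MeasurableSpace Y] [BorelSpace Y]

lemma measurable_probEval_closed
    {F : Set Y} (hF : IsClosed F) :
    @Measurable (ProbabilityMeasure Y) ℝ≥0∞ (borel (ProbabilityMeasure Y)) _
      (fun m => (m : Measure Y) F) := by
  letI : MeasurableSpace (ProbabilityMeasure Y) := borel (ProbabilityMeasure Y)
  haveI : BorelSpace (ProbabilityMeasure Y) := ⟨rfl⟩
  letI : MetricSpace Y := TopologicalSpace.metrizableSpaceMetric Y
  have δpos : ∀ n : ℕ, (0:ℝ) < 1 / (n + 1) := fun n => by positivity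
  set f : ℕ → BoundedContinuousFunction Y ℝ≥0 := fun n => thickenedIndicator (δpos n) F with hf
  have key : ∀ m : ProbabilityMeasure Y,
      (m : Measure Y) F = ⨅ n : ℕ, ∫⁻ y, (f n y : ℝ≥0∞) ∂(m : Measure Y) := by
    intro m
    refine le_antisymm (le_iInf fun n => ?_) ?_
    · exact measure_le_lintegral_thickenedIndicator _ hF.measurableSet (δpos n)
    · have h1 : ∀ n : ℕ, ∫⁻ y, (f n y : ℝ≥0∞) ∂(m : Measure Y)
          ≤ (m : Measure Y) (thickening (1 / (n + 1)) F) := by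
        intro n
        have hle : ∀ y, (f n y : ℝ≥0∞)
            ≤ (thickening (1 / (n + 1)) F).indicator (fun _ => (1:ℝ≥0∞)) y := by
          intro y
          by_cases hy : y ∈ thickening (1 / (n + 1)) F
          · rw [Set.indicator_of_mem hy]
            exact ENNReal.coe_le_coe.2 (thickenedIndicator_le_one (δpos n) F y)
          · rw [Set.indicator_of_notMem hy, thickenedIndicator_zero (δpos n) F hy]
            simp
        calc ∫⁻ y, (f n y : ℝ≥0∞) ∂(m : Measure Y)
            ≤ ∫⁻ y, (thickening (1 / (n + 1)) F).indicator (fun _ => (1:ℝ≥0∞)) y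
                ∂(m : Measure Y) := lintegral_mono hle
          _ = (m : Measure Y) (thickening (1 / (n + 1)) F) := by
              rw [lintegral_indicator isOpen_thickening.measurableSet]; simp
      have hδ : Tendsto (fun n : ℕ => 1 / ((n:ℝ) + 1)) atTop (𝓝[>] 0) := by
        apply tendsto_nhdsWithin_of_tendsto_nhds_of_eventually_within
        · exact tendsto_one_div_add_atTop_nhds_zero_nat
        · exact Eventually.of_forall fun n => δpos n
      have hT : Tendsto (fun n : ℕ => (m : Measure Y) (thickening (1 / (n + 1)) F))
          atTop (𝓝 ((m : Measure Y) F)) :=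
        (tendsto_measure_thickening_of_isClosed
          ⟨1, one_pos, measure_ne_top _ _⟩ hF).comp hδ
      refine ge_of_tendsto' hT fun n => ?_
      exact (iInf_le _ n).trans (h1 n)
  have hmeas : ∀ n : ℕ,
      Measurable (fun m : ProbabilityMeasure Y => ∫⁻ y, (f n y : ℝ≥0∞) ∂(m : Measure Y)) := by
    intro n
    have hc : Continuous (fun m : ProbabilityMeasure Y =>
        ((m.toFiniteMeasure.testAgainstNN (f n) : ℝ≥0) : ℝ≥0∞)) :=
      ENNReal.continuous_coe.comp (ProbabilityMeasure.continuous_testAgainstNN_eval (f n))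
    have : (fun m : ProbabilityMeasure Y => ∫⁻ y, (f n y : ℝ≥0∞) ∂(m : Measure Y))
        = fun m => ((m.toFiniteMeasure.testAgainstNN (f n) : ℝ≥0) : ℝ≥0∞) := by
      funext m
      rw [FiniteMeasure.testAgainstNN_coe_eq]
      rfl
    rw [this]
    exact hc.measurable
  simp only [funext key]
  exact Measurable.iInf hmeas

lemma measurable_probEval {A : Set Y} (hA : MeasurableSet A) :
    @Measurable (ProbabilityMeasure Y) ℝ≥0∞ (borel (ProbabilityMeasure Y)) _
      (fun m => (m : Measure Y) A) := by
  letI : MeasurableSpace (ProbabilityMeasure Y) := borel (ProbabilityMeasure Y)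
  haveI : BorelSpace (ProbabilityMeasure Y) := ⟨rfl⟩
  refine MeasurableSpace.induction_on_inter
    (C := fun A _ => Measurable fun m : ProbabilityMeasure Y => (m : Measure Y) A)
    (BorelSpace.measurable_eq.trans borel_eq_generateFrom_isClosed)
    (fun s hs t ht _ => hs.inter ht) ?_ ?_ ?_ ?_ _ hA
  · simpa using measurable_const
  · exact fun t ht => measurable_probEval_closed ht
  · intro t htm ht
    have : (fun m : ProbabilityMeasure Y => (m : Measure Y) tᶜ)
        = fun m : ProbabilityMeasure Y => 1 - (m : Measure Y) t := by
      funext m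
      rw [measure_compl htm (measure_ne_top _ _), measure_univ]
    rw [this]
    exact measurable_const.sub ht
  · intro g hdisj hgm hg
    have : (fun m : ProbabilityMeasure Y => (m : Measure Y) (⋃ i, g i))
        = fun m : ProbabilityMeasure Y => ∑' i, (m : Measure Y) (g i) := by
      funext m
      exact measure_iUnion hdisj hgm
    rw [this]
    exact Measurable.ennreal_tsum hg

end Eval
section TV

variable {X : Type*} [MeasurableSpace X]

lemma tvDist_bddAbove (ν₁ ν₂ : Measure X) [IsFiniteMeasure ν₁] [IsFiniteMeasure ν₂] :
    BddAbove (Set.range fun A : {A : Set X // MeasurableSet A} =>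
      |(ν₁ A.1).toReal - (ν₂ A.1).toReal|) := by
  refine ⟨(ν₁ Set.univ).toReal + (ν₂ Set.univ).toReal, ?_⟩
  rintro r ⟨A, rfl⟩
  have h1 : (ν₁ A.1).toReal ≤ (ν₁ Set.univ).toReal :=
    ENNReal.toReal_mono (measure_ne_top _ _) (measure_mono (Set.subset_univ _))
  have h2 : (ν₂ A.1).toReal ≤ (ν₂ Set.univ).toReal :=
    ENNReal.toReal_mono (measure_ne_top _ _) (measure_mono (Set.subset_univ _))
  have h3 : (0:ℝ) ≤ (ν₁ A.1).toReal := ENNReal.toReal_nonneg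
  have h4 : (0:ℝ) ≤ (ν₂ A.1).toReal := ENNReal.toReal_nonneg
  rw [abs_le]
  constructor <;> nlinarith

lemma abs_sub_le_tvDist {ν₁ ν₂ : Measure X} [IsFiniteMeasure ν₁] [IsFiniteMeasure ν₂]
    {A : Set X} (hA : MeasurableSet A) :
    |(ν₁ A).toReal - (ν₂ A).toReal| ≤ tvDist ν₁ ν₂ :=
  le_ciSup (tvDist_bddAbove ν₁ ν₂) (⟨A, hA⟩ : {A : Set X // MeasurableSet A})

lemma integral_le_integral_add_tvDist (ν₁ ν₂ : Measure X)
    [IsProbabilityMeasure ν₁] [IsProbabilityMeasure ν₂] {f : X → ℝ} (hf : Measurable f)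
    (h0 : ∀ x, 0 ≤ f x) (h1 : ∀ x, f x ≤ 1) :
    ∫ x, f x ∂ν₁ ≤ ∫ x, f x ∂ν₂ + tvDist ν₁ ν₂ := by
  have hint : ∀ (κ : Measure X) [IsProbabilityMeasure κ], Integrable f κ := by
    intro κ _
    refine (integrable_const (1:ℝ)).mono' hf.aestronglyMeasurable ?_
    exact .of_forall fun x => by rw [Real.norm_eq_abs, abs_of_nonneg (h0 x)]; exact h1 x
  have key : ∀ (κ : Measure X) [IsProbabilityMeasure κ],
      ∫ x, f x ∂κ = ∫ t in Set.Ioc (0:ℝ) 1, (κ {a | t ≤ f a}).toReal := by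
    intro κ _
    exact (hint κ).integral_eq_integral_Ioc_meas_le (.of_forall h0) (.of_forall h1)
  rw [key ν₁, key ν₂]
  set G₁ : ℝ → ℝ := fun t => (ν₁ {a | t ≤ f a}).toReal with hG₁
  set G₂ : ℝ → ℝ := fun t => (ν₂ {a | t ≤ f a}).toReal with hG₂
  have hGmono : ∀ (κ : Measure X) [IsFiniteMeasure κ],
      Antitone fun t : ℝ => (κ {a | t ≤ f a}).toReal := by
    intro κ _ s t hst
    exact ENNReal.toReal_mono (measure_ne_top _ _)
      (measure_mono fun a (ha : t ≤ f a) => hst.trans ha)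
  have hGint : ∀ (κ : Measure X) [IsProbabilityMeasure κ],
      IntegrableOn (fun t : ℝ => (κ {a | t ≤ f a}).toReal) (Set.Ioc (0:ℝ) 1) := by
    intro κ _
    have hvol : (volume : Measure ℝ) (Set.Ioc (0:ℝ) 1) ≠ ⊤ := by
      simp [Real.volume_Ioc]
    refine Measure.integrableOn_of_bounded (M := 1) hvol
      ((hGmono κ).measurable).aestronglyMeasurable (.of_forall fun t => ?_)
    rw [Real.norm_eq_abs, abs_of_nonneg ENNReal.toReal_nonneg]
    exact ENNReal.toReal_le_of_le_ofReal one_pos.le (by simpa using prob_le_one)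
  have step : ∫ t in Set.Ioc (0:ℝ) 1, G₁ t
      ≤ ∫ t in Set.Ioc (0:ℝ) 1, (G₂ t + tvDist ν₁ ν₂) := by
    have hvol : (volume : Measure ℝ) (Set.Ioc (0:ℝ) 1) < ⊤ := by
      simp [Real.volume_Ioc]
    refine setIntegral_mono_on (hGint ν₁) ((hGint ν₂).add (integrableOn_const hvol.ne))
      measurableSet_Ioc (fun t _ => ?_)
    have hAm : MeasurableSet {a : X | t ≤ f a} := hf measurableSet_Ici
    have h := abs_le.1 (abs_sub_le_tvDist (ν₁ := ν₁) (ν₂ := ν₂) hAm)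
    simp only [hG₁, hG₂]
    linarith [h.2]
  calc ∫ t in Set.Ioc (0:ℝ) 1, G₁ t ≤ ∫ t in Set.Ioc (0:ℝ) 1, (G₂ t + tvDist ν₁ ν₂) := step
    _ = (∫ t in Set.Ioc (0:ℝ) 1, G₂ t) + tvDist ν₁ ν₂ := by
        have hvol : (volume : Measure ℝ) (Set.Ioc (0:ℝ) 1) < ⊤ := by
          simp [Real.volume_Ioc]
        rw [integral_add (hGint ν₂) (integrableOn_const hvol.ne)]
        simp [Real.volume_Ioc]; rfl

end TV
section Conv

lemma lintegral_toReal_le_tv {X : Type*} [MeasurableSpace X] (ν₁ ν₂ : Measure X)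
    [IsProbabilityMeasure ν₁] [IsProbabilityMeasure ν₂] {f : X → ℝ≥0∞}
    (hf : Measurable f) (h1 : ∀ x, f x ≤ 1) :
    (∫⁻ x, f x ∂ν₁).toReal ≤ (∫⁻ x, f x ∂ν₂).toReal + tvDist ν₁ ν₂ := by
  have hint : ∀ (κ : Measure X), ∫ x, (f x).toReal ∂κ = (∫⁻ x, f x ∂κ).toReal := fun κ =>
    integral_toReal hf.aemeasurable (.of_forall fun x => lt_of_le_of_lt (h1 x) ENNReal.one_lt_top)
  rw [← hint, ← hint]
  exact integral_le_integral_add_tvDist ν₁ ν₂ hf.ennreal_toReal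
    (fun x => ENNReal.toReal_nonneg)
    (fun x => by simpa using ENNReal.toReal_mono ENNReal.one_ne_top (h1 x))

lemma abs_lintegral_sub_le_tv {X : Type*} [MeasurableSpace X] (ν₁ ν₂ : Measure X)
    [IsProbabilityMeasure ν₁] [IsProbabilityMeasure ν₂] {f : X → ℝ≥0∞}
    (hf : Measurable f) (h1 : ∀ x, f x ≤ 1) :
    |(∫⁻ x, f x ∂ν₁).toReal - (∫⁻ x, f x ∂ν₂).toReal| ≤ tvDist ν₁ ν₂ := by
  have h12 := lintegral_toReal_le_tv ν₁ ν₂ hf h1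
  have h21 := lintegral_toReal_le_tv ν₂ ν₁ hf h1
  have hsymm : tvDist ν₂ ν₁ = tvDist ν₁ ν₂ := by
    unfold tvDist
    congr 1
    funext A
    rw [abs_sub_comm]
  rw [abs_le]
  constructor <;> [linarith [hsymm ▸ h21]; linarith]

lemma convAct_apply {G X : Type*} [MeasurableSpace G] [MeasurableSpace X] [SMul G X]
    (hact : Measurable fun q : G × X => q.1 • q.2)
    (m : Measure G) (κ : Measure X) [SFinite κ] {S : Set X} (hS : MeasurableSet S) :
    convAct m κ S = ∫⁻ g, κ ((fun x => g • x) ⁻¹' S) ∂m := by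
  rw [convAct, Measure.map_apply hact hS, Measure.prod_apply (hact hS)]
  rfl

lemma lintegral_convAct {G X : Type*} [MeasurableSpace G] [MeasurableSpace X] [SMul G X]
    (hact : Measurable fun q : G × X => q.1 • q.2)
    (m : Measure G) (κ : Measure X) [SFinite κ] {f : X → ℝ≥0∞} (hf : Measurable f) :
    ∫⁻ x, f x ∂(convAct m κ) = ∫⁻ g, ∫⁻ x, f (g • x) ∂κ ∂m := by
  rw [convAct, lintegral_map hf hact]
  exact lintegral_prod _ ((hf.comp hact).aemeasurable)

end Conv
/-- If `ν` is a `μ`-stationary SAT probability measure on `X`, `p : X → Y` is a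
measurable `G`-equivariant map onto a compact metrizable `G`-space `Y` whose pushforward
`p_*ν` is the unique `μ`-stationary probability measure on `Y`, then every measurable
`G`-equivariant map `β : X → P(Y)` satisfies `β x = δ_{p x}` for `ν`-a.e. `x`. -/
theorem stmt0
    {G X Y : Type*}
    [TopologicalSpace G] [Group G] [IsTopologicalGroup G]
    [LocallyCompactSpace G] [SecondCountableTopology G]
    [MeasurableSpace G] [BorelSpace G]
    [MeasurableSpace X] [MulAction G X]
    (hactX : Measurable fun q : G × X => q.1 • q.2)
    [TopologicalSpace Y] [CompactSpace Y] [TopologicalSpace.MetrizableSpace Y] [Nonempty Y]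
    [MeasurableSpace Y] [BorelSpace Y] [MulAction G Y]
    (hactY : Continuous fun q : G × Y => q.1 • q.2)
    (μ : Measure G) [IsProbabilityMeasure μ]
    (ν : Measure X) [IsProbabilityMeasure ν]
    (hstat : convAct μ ν = ν) (hSAT : IsSAT G ν)
    (p : X → Y) (hp : Measurable p)
    (hpeq : ∀ (g : G) (x : X), p (g • x) = g • p x)
    (hpν_stat : convAct μ (Measure.map p ν) = Measure.map p ν)
    (hpν_uniq : ∀ η : Measure Y, IsProbabilityMeasure η → convAct μ η = η →
      η = Measure.map p ν)
    (β : X → ProbabilityMeasure Y)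
    (hβ : @Measurable X (ProbabilityMeasure Y) _ (borel (ProbabilityMeasure Y)) β)
    (hβeq : ∀ g : G, ∀ᵐ x ∂ν,
      (β (g • x) : Measure Y) = Measure.map (fun y => g • y) (β x : Measure Y)) :
    ∀ᵐ x ∂ν, (β x : Measure Y) = Measure.dirac (p x) := by
  letI : MeasurableSpace (ProbabilityMeasure Y) := borel (ProbabilityMeasure Y)
  letI : MetricSpace Y := TopologicalSpace.metrizableSpaceMetric Y
  haveI : SecondCountableTopology Y := EMetric.secondCountable_of_sigmaCompact Y
  have hactYm : Measurable fun q : G × Y => q.1 • q.2 := hactY.measurable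
  have hsmulY : ∀ g : G, Measurable fun y : Y => g • y := fun g =>
    (hactY.comp (Continuous.prodMk_right g)).measurable
  set βm : X → Measure Y := fun x => (β x : Measure Y) with hβm_def
  have hβm : Measurable βm :=
    Measure.measurable_of_measurable_coe _ fun s hs => (measurable_probEval hs).comp hβ
  have hev : ∀ {A : Set Y}, MeasurableSet A → Measurable fun x => βm x A :=
    fun hA => (Measure.measurable_coe hA).comp hβm
  have hev1 : ∀ (A : Set Y) (x : X), βm x A ≤ 1 := fun A x => prob_le_one
  set η : Measure Y := ν.bind βm with hη_def
  have hη_apply : ∀ {S : Set Y}, MeasurableSet S → η S = ∫⁻ x, βm x S ∂ν :=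
    fun hS => Measure.bind_apply hS hβm.aemeasurable
  haveI hη_prob : IsProbabilityMeasure η := ⟨by
    rw [hη_apply MeasurableSet.univ]
    simp⟩
  have hswap : ∀ (g : G) {S : Set Y}, MeasurableSet S →
      ∫⁻ x, βm x ((fun y => g • y) ⁻¹' S) ∂ν = ∫⁻ x, βm (g • x) S ∂ν := by
    intro g S hS
    refine lintegral_congr_ae ?_
    filter_upwards [hβeq g] with x hx
    rw [← Measure.map_apply (hsmulY g) hS, ← hx]
  have hη_stat : convAct μ η = η := by
    ext S hS
    rw [convAct_apply hactYm μ η hS]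
    have h1 : ∀ g : G, η ((fun y => g • y) ⁻¹' S) = ∫⁻ x, βm (g • x) S ∂ν := fun g => by
      rw [hη_apply ((hsmulY g) hS), hswap g hS]
    simp_rw [h1]
    have h2 : ∫⁻ g, ∫⁻ x, βm (g • x) S ∂ν ∂μ = ∫⁻ q : G × X, βm (q.1 • q.2) S ∂(μ.prod ν) :=
      (lintegral_prod _ (((Measure.measurable_coe hS).comp (hβm.comp hactX)).aemeasurable)).symm
    have h3 : ∫⁻ q : G × X, βm (q.1 • q.2) S ∂(μ.prod ν)
        = ∫⁻ z, βm z S ∂(convAct μ ν) := by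
      rw [convAct, lintegral_map (hev hS) hactX]
    rw [h2, h3, hstat, ← hη_apply hS]
  have hη_eq : η = Measure.map p ν := hpν_uniq η hη_prob hη_stat
  have hkey_conv : ∀ (m' : Measure G) [IsProbabilityMeasure m'] {A : Set Y},
      MeasurableSet A →
      ∫⁻ x, βm x A ∂(convAct m' ν) = convAct m' ν (p ⁻¹' A) := by
    intro m' _ A hA
    rw [lintegral_convAct hactX m' ν (hev hA)]
    have h1 : ∀ g : G, ∫⁻ x, βm (g • x) A ∂ν = ν ((fun x => g • x) ⁻¹' (p ⁻¹' A)) := by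
      intro g
      rw [← hswap g hA, ← hη_apply ((hsmulY g) hA), hη_eq,
        Measure.map_apply hp ((hsmulY g) hA)]
      congr 1
      ext x
      simp [Set.mem_preimage, hpeq g x]
    simp_rw [h1]
    rw [← convAct_apply hactX m' ν (hp hA)]
  have hkey : ∀ (lam : Measure X) [IsProbabilityMeasure lam], lam ≪ ν →
      ∀ {A : Set Y}, MeasurableSet A → ∫⁻ x, βm x A ∂lam = lam (p ⁻¹' A) := by
    intro lam _ hlam A hA
    have hle1 : ∀ (κ : Measure X) [IsProbabilityMeasure κ], ∫⁻ x, βm x A ∂κ ≤ 1 := by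
      intro κ _
      calc ∫⁻ x, βm x A ∂κ ≤ ∫⁻ _, 1 ∂κ := lintegral_mono fun x => hev1 A x
        _ = 1 := by simp
    have hne1 : ∫⁻ x, βm x A ∂lam ≠ ⊤ := ((hle1 lam).trans_lt ENNReal.one_lt_top).ne
    have hne2 : lam (p ⁻¹' A) ≠ ⊤ := measure_ne_top _ _
    have habs : ∀ ε : ℝ, 0 < ε →
        |(∫⁻ x, βm x A ∂lam).toReal - (lam (p ⁻¹' A)).toReal| ≤ 2 * ε := by
      intro ε hε
      obtain ⟨m', hm', htv⟩ := hSAT lam inferInstance hlam ε hε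
      haveI := hm'
      haveI : IsProbabilityMeasure (μ.prod ν) := by infer_instance
      haveI : IsProbabilityMeasure (convAct m' ν) := Measure.isProbabilityMeasure_map hactX.aemeasurable
      have e1 : |(∫⁻ x, βm x A ∂lam).toReal - (∫⁻ x, βm x A ∂(convAct m' ν)).toReal|
          ≤ tvDist lam (convAct m' ν) :=
        abs_lintegral_sub_le_tv _ _ (hev hA) (hev1 A)
      have e2 : |(convAct m' ν (p ⁻¹' A)).toReal - (lam (p ⁻¹' A)).toReal|
          ≤ tvDist lam (convAct m' ν) := by
        rw [abs_sub_comm]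
        exact abs_sub_le_tvDist (hp hA)
      have e3 := hkey_conv m' hA
      have tri := abs_sub_le ((∫⁻ x, βm x A ∂lam).toReal)
        ((∫⁻ x, βm x A ∂(convAct m' ν)).toReal) ((lam (p ⁻¹' A)).toReal)
      rw [e3] at e1 tri
      linarith [e1, e2, tri, htv]
    have hzero : (∫⁻ x, βm x A ∂lam).toReal = (lam (p ⁻¹' A)).toReal := by
      by_contra hne
      have hpos : 0 < |(∫⁻ x, βm x A ∂lam).toReal - (lam (p ⁻¹' A)).toReal| := by
        rw [abs_pos, sub_ne_zero]
        exact hne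
      have := habs (|(∫⁻ x, βm x A ∂lam).toReal - (lam (p ⁻¹' A)).toReal| / 4)
        (by positivity)
      linarith
    exact (ENNReal.toReal_eq_toReal_iff' hne1 hne2).mp hzero
  have hsetint : ∀ {A : Set Y}, MeasurableSet A → ∀ {B : Set X}, MeasurableSet B →
      ∫⁻ x in B, βm x A ∂ν = ν (B ∩ p ⁻¹' A) := by
    intro A hA B hB
    rcases eq_or_ne (ν B) 0 with h0 | h0
    · rw [Measure.restrict_eq_zero.mpr h0]
      rw [measure_mono_null Set.inter_subset_left h0]
      simp
    · set lam : Measure X := (ν B)⁻¹ • ν.restrict B with hlam_def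
      have hBuniv : lam Set.univ = 1 := by
        rw [hlam_def, Measure.smul_apply, Measure.restrict_apply_univ, smul_eq_mul]
        exact ENNReal.inv_mul_cancel h0 (measure_ne_top _ _)
      haveI : IsProbabilityMeasure lam := ⟨hBuniv⟩
      have hac : lam ≪ ν :=
        (Measure.absolutelyContinuous_of_le Measure.restrict_le_self).smul_left _
      have := hkey lam hac hA
      rw [hlam_def, lintegral_smul_measure, Measure.smul_apply,
        Measure.restrict_apply (hp hA), Set.inter_comm, smul_eq_mul] at this
      have hinv0 : (ν B)⁻¹ ≠ 0 := ENNReal.inv_ne_zero.mpr (measure_ne_top _ _)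
      have hinvt : (ν B)⁻¹ ≠ ⊤ := ENNReal.inv_ne_top.mpr h0
      exact (ENNReal.mul_right_inj hinv0 hinvt).mp this
  have hae : ∀ {A : Set Y}, MeasurableSet A →
      ∀ᵐ x ∂ν, βm x A = Measure.dirac (p x) A := by
    intro A hA
    have hB : MeasurableSet (p ⁻¹' A) := hp hA
    have h1 : ∀ᵐ x ∂ν.restrict (p ⁻¹' A), βm x A = 1 := by
      have hint : ∫⁻ x in p ⁻¹' A, βm x A ∂ν = ν (p ⁻¹' A) := by
        rw [hsetint hA hB, Set.inter_self]
      have hsub : ∫⁻ x in p ⁻¹' A, (1 - βm x A) ∂ν = 0 := by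
        rw [lintegral_sub (hev hA) (by rw [hint]; exact measure_ne_top _ _)
          (Filter.Eventually.of_forall fun x => hev1 A x)]
        rw [hint, setLIntegral_one, tsub_self]
      have h := (lintegral_eq_zero_iff (measurable_const.sub (hev hA))).1 hsub
      filter_upwards [h] with x hx
      have hx' : (1:ℝ≥0∞) - βm x A = 0 := hx
      exact le_antisymm (hev1 A x) (tsub_eq_zero_iff_le.1 hx') |>.symm ▸ rfl
    have h2 : ∀ᵐ x ∂ν.restrict (p ⁻¹' A)ᶜ, βm x A = 0 := by
      have hint : ∫⁻ x in (p ⁻¹' A)ᶜ, βm x A ∂ν = 0 := by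
        rw [hsetint hA hB.compl]
        simp
      have h := (lintegral_eq_zero_iff (hev hA)).1 hint
      filter_upwards [h] with x hx
      exact hx
    rw [ae_restrict_iff' hB] at h1
    rw [ae_restrict_iff' hB.compl] at h2
    filter_upwards [h1, h2] with x hx1 hx2
    rw [Measure.dirac_apply' _ hA]
    by_cases hx : x ∈ p ⁻¹' A
    · rw [hx1 hx]
      have hxA : p x ∈ A := hx
      rw [Set.indicator_of_mem hxA]
      rfl
    · rw [hx2 hx]
      have hxA : p x ∉ A := hx
      rw [Set.indicator_of_notMem hxA]
  obtain ⟨b, hb_count, -, hb_basis⟩ := TopologicalSpace.exists_countable_basis Y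
  set T : Set (Set (Set Y)) := {t : Set (Set Y) | t.Finite ∧ t ⊆ b ∧ t.Nonempty} with hT_def
  set S : Set (Set Y) := Set.sInter '' T with hS_def
  have hmem : ∀ {s : Set Y}, s ∈ S ↔ ∃ t, t ∈ T ∧ ⋂₀ t = s := fun {s} => Iff.rfl
  have hT_count : T.Countable := by
    refine Set.Countable.mono ?_ (Set.countable_setOf_finite_subset hb_count)
    intro t ht
    exact ⟨ht.1, ht.2.1⟩
  have hS_count : S.Countable := hT_count.image _
  have hS_open : ∀ s ∈ S, IsOpen s := by
    intro s hs
    obtain ⟨t, ⟨htf, htb, -⟩, rfl⟩ := hmem.1 hs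
    exact htf.isOpen_sInter fun u hu => hb_basis.isOpen (htb hu)
  have hS_pi : IsPiSystem S := by
    rintro s₁ hs₁ s₂ hs₂ -
    obtain ⟨t₁, ⟨ht₁f, ht₁b, ht₁ne⟩, rfl⟩ := hmem.1 hs₁
    obtain ⟨t₂, ⟨ht₂f, ht₂b, ht₂ne⟩, rfl⟩ := hmem.1 hs₂
    exact hmem.2 ⟨t₁ ∪ t₂, ⟨ht₁f.union ht₂f, Set.union_subset ht₁b ht₂b, ht₁ne.inl⟩,
      Set.sInter_union t₁ t₂⟩
  have hS_gen : (inferInstance : MeasurableSpace Y) = MeasurableSpace.generateFrom S := by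
    refine le_antisymm ?_
      (MeasurableSpace.generateFrom_le fun s hs => (hS_open s hs).measurableSet)
    rw [BorelSpace.measurable_eq (α := Y), hb_basis.borel_eq_generateFrom]
    refine MeasurableSpace.generateFrom_le fun u hu => ?_
    exact MeasurableSpace.measurableSet_generateFrom (hmem.2
      ⟨{u}, ⟨Set.finite_singleton u, Set.singleton_subset_iff.2 hu, Set.singleton_nonempty u⟩,
        Set.sInter_singleton u⟩)
  have hall : ∀ᵐ x ∂ν, ∀ s ∈ S, βm x s = Measure.dirac (p x) s :=
    (MeasureTheory.ae_ball_iff hS_count).mpr fun s hs => hae (hS_open s hs).measurableSet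
  filter_upwards [hall] with x hx
  exact ext_of_generate_finite S hS_gen hS_pi (fun s hs => hx s hs) (by simp)
end

section
/- Let G be a locally compact second-countable group acting jointly measurably on a measurable space X, and let ν be a quasi-invariant probability measure on X, meaning that for every g ∈ G the measure A ↦ ν(g⁻¹ • A) is absolutely continuous with respect to ν. Then ν is SAT if and only if for every bounded measurable function f : X → ℝ one has sup_{g ∈ G} |∫_X f(g • x) dν(x)| = esssup_ν |f|, the ν-essential supremum of |f|. -/
open MeasureTheory Set Filter Topology
open scoped symmDiff


open MeasureTheory

namespace SATaux

section


variable {X : Type*} [MeasurableSpace X] (ν : Measure X) [IsProbabilityMeasure ν]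

/-- indicator of a measurable set as an element of L¹ -/
noncomputable def ind {A : Set X} (hA : MeasurableSet A) : Lp ℝ 1 ν :=
  indicatorConstLp 1 hA (measure_ne_top ν A) (1 : ℝ)

lemma ind_congr {A B : Set X} (h : A = B) (hA : MeasurableSet A) :
    ind ν hA = ind ν (h ▸ hA) := by subst h; rfl

lemma norm_ind {A : Set X} (hA : MeasurableSet A) : ‖ind ν hA‖ = (ν A).toReal := by
  rw [ind, norm_indicatorConstLp one_ne_zero ENNReal.one_ne_top]; simp; rfl

lemma ind_empty : ind ν (MeasurableSet.empty : MeasurableSet (∅ : Set X)) = 0 :=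
  indicatorConstLp_empty

lemma ind_null {A : Set X} (hA : MeasurableSet A) (h : ν A = 0) : ind ν hA = 0 := by
  rw [← ind_empty ν, ind, ind]
  exact (indicatorConstLp_inj hA _ MeasurableSet.empty _ one_ne_zero).mpr (ae_eq_empty.2 h)

lemma sum_ind (f : ℕ → Set X) (hm : ∀ i, MeasurableSet (f i)) (hd : Pairwise (Function.onFun Disjoint f))
    (s : Finset ℕ) :
    ∑ i ∈ s, ind ν (hm i) =
      ind ν (s.measurableSet_biUnion (fun i _ => hm i)) := by
  classical
  induction s using Finset.induction with
  | empty =>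
      rw [Finset.sum_empty, ind_congr ν (show (⋃ i ∈ (∅ : Finset ℕ), f i) = ∅ by simp)]
      exact (ind_empty ν).symm
  | @insert a s ha ih =>
      rw [Finset.sum_insert ha, ih,
        ind_congr ν (show (⋃ i ∈ insert a s, f i) = f a ∪ ⋃ i ∈ s, f i by
          simp [Set.biUnion_insert])]
      rw [ind, ind, ind, ← indicatorConstLp_disjoint_union]
      exact Set.disjoint_iUnion₂_right.mpr fun i hi => hd (fun h => ha (h ▸ hi))

lemma hasSum_ind (f : ℕ → Set X) (hm : ∀ i, MeasurableSet (f i))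
    (hd : Pairwise (Function.onFun Disjoint f)) :
    HasSum (fun i => ind ν (hm i)) (ind ν (MeasurableSet.iUnion hm)) := by
  have hmeas : ∀ s : Finset ℕ, MeasurableSet (⋃ i ∈ s, f i) :=
    fun s => s.measurableSet_biUnion (fun i _ => hm i)
  have hsum : HasSum (fun i => ν (f i)) (ν (⋃ i, f i)) := by
    rw [measure_iUnion hd hm]; exact ENNReal.summable.hasSum
  have key : Tendsto (fun s : Finset ℕ => ν ((⋃ i ∈ s, f i) ∆ (⋃ i, f i))) atTop (𝓝 0) := by
    have h1 : ∀ s : Finset ℕ,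
        ν ((⋃ i ∈ s, f i) ∆ (⋃ i, f i)) = ν (⋃ i, f i) - ∑ i ∈ s, ν (f i) := by
      intro s
      have hsub : (⋃ i ∈ s, f i) ⊆ ⋃ i, f i := Set.iUnion₂_subset fun i _ => Set.subset_iUnion f i
      rw [symmDiff_of_le hsub, measure_diff hsub (hmeas s).nullMeasurableSet (measure_ne_top ν _),
        measure_biUnion_finset (fun i _ j _ hij => hd hij) (fun i _ => hm i)]
    simp_rw [h1]
    have := ENNReal.Tendsto.sub (tendsto_const_nhds (x := ν (⋃ i, f i))) hsum
      (Or.inl (measure_ne_top ν _))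
    simpa using this
  have := tendsto_indicatorConstLp_set (p := 1) (μ := ν) (c := (1 : ℝ))
    (ht := fun s : Finset ℕ => hmeas s) (hμt := fun s => measure_ne_top ν _)
    (hs := MeasurableSet.iUnion hm) (hμs := measure_ne_top ν _) ENNReal.one_ne_top key
  rw [HasSum]
  convert this using 2 with s
  exact sum_ind ν f hm hd s
  · rfl
  · rfl


open scoped Classical in
/-- the signed measure `A ↦ φ (1_A)` -/
noncomputable def sgm (φ : Lp ℝ 1 ν →L[ℝ] ℝ) : SignedMeasure X where
  measureOf' A := if h : MeasurableSet A then φ (ind ν h) else 0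
  empty' := by
    show (if h : MeasurableSet (∅ : Set X) then φ (ind ν h) else 0) = 0
    rw [dif_pos MeasurableSet.empty, ind_empty, map_zero]
  not_measurable' A h := dif_neg h
  m_iUnion' f hm hd := by
    have h1 : (fun i => if h : MeasurableSet (f i) then φ (ind ν h) else 0)
        = fun i => φ (ind ν (hm i)) := funext fun i => dif_pos (hm i)
    show HasSum _ (if h : MeasurableSet (⋃ i, f i) then φ (ind ν h) else 0)
    rw [h1, dif_pos (MeasurableSet.iUnion hm)]
    exact (hasSum_ind ν f hm hd).mapL φ

open scoped Classical in
lemma sgm_apply (φ : Lp ℝ 1 ν →L[ℝ] ℝ) {A : Set X} (hA : MeasurableSet A) :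
    sgm ν φ A = φ (ind ν hA) := by
  show (if h : MeasurableSet A then φ (ind ν h) else 0) = _
  rw [dif_pos hA]

lemma sgm_ac (φ : Lp ℝ 1 ν →L[ℝ] ℝ) : sgm ν φ ≪ᵥ ν.toENNRealVectorMeasure := by
  refine VectorMeasure.AbsolutelyContinuous.mk fun A hA h0 => ?_
  rw [Measure.toENNRealVectorMeasure_apply_measurable hA] at h0
  rw [sgm_apply ν φ hA, ind_null ν hA h0, map_zero]

/-- set-integral formula for the Radon–Nikodym derivative of `sgm`. -/
lemma sgm_rnDeriv_setIntegral (φ : Lp ℝ 1 ν →L[ℝ] ℝ) {A : Set X} (hA : MeasurableSet A) :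
    ∫ x in A, (sgm ν φ).rnDeriv ν x ∂ν = φ (ind ν hA) := by
  have h := SignedMeasure.withDensityᵥ_rnDeriv_eq (sgm ν φ) ν (sgm_ac ν φ)
  rw [← sgm_apply ν φ hA]
  conv_rhs => rw [← h]
  rw [withDensityᵥ_apply (SignedMeasure.integrable_rnDeriv _ _) hA]

lemma sgm_rnDeriv_bound (φ : Lp ℝ 1 ν →L[ℝ] ℝ) :
    ∀ᵐ x ∂ν, |(sgm ν φ).rnDeriv ν x| ≤ ‖φ‖ := by
  set d := (sgm ν φ).rnDeriv ν with hd
  have hint : Integrable d ν := SignedMeasure.integrable_rnDeriv _ _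
  have hb : ∀ {A : Set X} (hA : MeasurableSet A), |φ (ind ν hA)| ≤ ‖φ‖ * (ν A).toReal := by
    intro A hA
    calc |φ (ind ν hA)| = ‖φ (ind ν hA)‖ := rfl
    _ ≤ ‖φ‖ * ‖ind ν hA‖ := φ.le_opNorm _
    _ = ‖φ‖ * (ν A).toReal := by rw [norm_ind]
  have h1 : 0 ≤ᵐ[ν] fun x => ‖φ‖ - d x := by
    refine ae_nonneg_of_forall_setIntegral_nonneg ((integrable_const _).sub hint) ?_
    intro s hs _
    rw [integral_sub (integrableOn_const (C := ‖φ‖) (measure_ne_top ν s)) hint.integrableOn,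
      setIntegral_const, sgm_rnDeriv_setIntegral ν φ hs, smul_eq_mul, mul_comm, measureReal_def]
    have := (abs_le.1 (hb hs)).2
    linarith
  have h2 : 0 ≤ᵐ[ν] fun x => d x + ‖φ‖ := by
    refine ae_nonneg_of_forall_setIntegral_nonneg (hint.add (integrable_const _)) ?_
    intro s hs _
    rw [integral_add hint.integrableOn (integrableOn_const (C := ‖φ‖) (measure_ne_top ν s)),
      setIntegral_const, sgm_rnDeriv_setIntegral ν φ hs, smul_eq_mul, mul_comm, measureReal_def]
    have := (abs_le.1 (hb hs)).1
    linarith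
  filter_upwards [h1, h2] with x hx1 hx2
  rw [abs_le]; constructor <;> simp only [Pi.zero_apply] at hx1 hx2 <;> linarith


/-- Representation of a continuous linear functional on `L¹(ν)` by a bounded
measurable function. -/
lemma dual_repr (φ : Lp ℝ 1 ν →L[ℝ] ℝ) :
    ∃ d : X → ℝ, Measurable d ∧ (∀ x, |d x| ≤ ‖φ‖) ∧
      ∀ h : Lp ℝ 1 ν, φ h = ∫ x, d x * (h : X → ℝ) x ∂ν := by
  set d0 := (sgm ν φ).rnDeriv ν with hd0
  set d : X → ℝ := fun x => max (-‖φ‖) (min ‖φ‖ (d0 x)) with hdd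
  have dmeas : Measurable d :=
    measurable_const.max (measurable_const.min (SignedMeasure.measurable_rnDeriv _ _))
  have dbound : ∀ x, |d x| ≤ ‖φ‖ := by
    intro x
    rw [abs_le]
    exact ⟨le_max_left _ _,
      max_le ((neg_nonpos.2 (norm_nonneg φ)).trans (norm_nonneg φ)) (min_le_left _ _)⟩
  have dae : d =ᵐ[ν] d0 := by
    filter_upwards [sgm_rnDeriv_bound ν φ] with x hx
    rw [abs_le] at hx
    rw [hdd]
    simp only
    rw [min_eq_right hx.2, max_eq_right hx.1]
  have dint : Integrable d ν := (SignedMeasure.integrable_rnDeriv _ _).congr dae.symm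
  have dset : ∀ {A : Set X} (hA : MeasurableSet A), ∫ x in A, d x ∂ν = φ (ind ν hA) := by
    intro A hA
    rw [integral_congr_ae (ae_restrict_of_ae dae), sgm_rnDeriv_setIntegral ν φ hA]
  have mul_int : ∀ (u : X → ℝ), Integrable u ν → Integrable (fun x => d x * u x) ν := by
    intro u hu
    exact hu.bdd_mul dmeas.aestronglyMeasurable (Eventually.of_forall fun x => by
      rw [Real.norm_eq_abs]; exact dbound x)
  refine ⟨d, dmeas, dbound, ?_⟩
  refine Lp.induction ENNReal.one_ne_top
    (fun h : Lp ℝ 1 ν => φ h = ∫ x, d x * (h : X → ℝ) x ∂ν) ?_ ?_ ?_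
  · -- indicator case
    intro c s hs hμs
    rw [Lp.simpleFunc.coe_indicatorConst]
    have hsm : indicatorConstLp 1 hs hμs.ne c = c • ind ν hs := by
      unfold ind
      ext1
      refine indicatorConstLp_coeFn.trans ?_
      refine EventuallyEq.trans ?_
        (Lp.coeFn_smul c (indicatorConstLp 1 hs (measure_ne_top ν s) (1 : ℝ))).symm
      filter_upwards [indicatorConstLp_coeFn (p := 1) (hs := hs)
        (hμs := measure_ne_top ν s) (c := (1 : ℝ))] with x hx
      rw [Pi.smul_apply, hx]
      by_cases hxs : x ∈ s <;>
        simp [Set.indicator_of_mem, Set.indicator_of_notMem, hxs]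
    have hR : ∫ x, d x * (indicatorConstLp 1 hs hμs.ne c : X → ℝ) x ∂ν
        = (∫ x in s, d x ∂ν) * c := by
      rw [integral_congr_ae (g := fun x => d x * s.indicator (fun _ => c) x) ?hcongr]
      case hcongr =>
        filter_upwards [indicatorConstLp_coeFn (p := 1) (hs := hs)
          (hμs := hμs.ne) (c := c)] with x hx
        rw [hx]
      have : (fun x => d x * s.indicator (fun _ => c) x)
          = s.indicator (fun x => d x * c) := by
        funext x
        by_cases hxs : x ∈ s <;>
          simp [Set.indicator_of_mem, Set.indicator_of_notMem, hxs]
      rw [this, integral_indicator hs, integral_mul_const]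
    rw [hR, hsm, ContinuousLinearMap.map_smul, smul_eq_mul, ← dset hs, mul_comm]
  · -- additivity case
    intro F G hF hG hdisj PF PG
    have hFi : Integrable F ν := memLp_one_iff_integrable.1 hF
    have hGi : Integrable G ν := memLp_one_iff_integrable.1 hG
    have h2 : ∀ (u : X → ℝ) (hu : MemLp u 1 ν),
        (∫ x, d x * (hu.toLp u : X → ℝ) x ∂ν) = ∫ x, d x * u x ∂ν := by
      intro u hu
      refine integral_congr_ae ?_
      filter_upwards [hu.coeFn_toLp] with x hx
      rw [hx]
    rw [map_add, PF, PG, h2 F hF, h2 G hG]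
    have hcongr : (fun x => d x * ((hF.toLp F + hG.toLp G : Lp ℝ 1 ν) : X → ℝ) x)
        =ᵐ[ν] fun x => d x * F x + d x * G x := by
      filter_upwards [Lp.coeFn_add (hF.toLp F) (hG.toLp G), hF.coeFn_toLp, hG.coeFn_toLp]
        with x h1 hf hg
      rw [h1, Pi.add_apply, hf, hg]
      ring
    rw [integral_congr_ae hcongr, integral_add (mul_int F hFi) (mul_int G hGi)]
  · -- closedness
    have cont : Continuous fun h : Lp ℝ 1 ν => ∫ x, d x * (h : X → ℝ) x ∂ν := by
      refine (LipschitzWith.of_dist_le_mul (K := ‖φ‖₊)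
        (f := fun h : Lp ℝ 1 ν => ∫ x, d x * (h : X → ℝ) x ∂ν) fun h₁ h₂ => ?_).continuous
      rw [Real.dist_eq, dist_eq_norm]
      have e1 : ∫ x, d x * (h₁ : X → ℝ) x ∂ν - ∫ x, d x * (h₂ : X → ℝ) x ∂ν
          = ∫ x, d x * ((h₁ - h₂ : Lp ℝ 1 ν) : X → ℝ) x ∂ν := by
        rw [← integral_sub (mul_int _ (L1.integrable_coeFn h₁)) (mul_int _ (L1.integrable_coeFn h₂))]
        refine integral_congr_ae ?_
        filter_upwards [Lp.coeFn_sub h₁ h₂] with x hx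
        rw [hx, Pi.sub_apply]
        ring
      rw [e1, ← Real.norm_eq_abs]
      calc ‖∫ x, d x * ((h₁ - h₂ : Lp ℝ 1 ν) : X → ℝ) x ∂ν‖
          ≤ ∫ x, ‖d x * ((h₁ - h₂ : Lp ℝ 1 ν) : X → ℝ) x‖ ∂ν :=
            norm_integral_le_integral_norm _
        _ ≤ ∫ x, ‖φ‖ * ‖((h₁ - h₂ : Lp ℝ 1 ν) : X → ℝ) x‖ ∂ν := by
            refine integral_mono (mul_int _ (L1.integrable_coeFn _)).norm
              ((L1.integrable_coeFn _).norm.const_mul _) fun x => ?_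
            rw [norm_mul]
            exact mul_le_mul_of_nonneg_right (by rw [Real.norm_eq_abs]; exact dbound x)
              (norm_nonneg _)
        _ = ‖φ‖ * ‖h₁ - h₂‖ := by
            rw [integral_const_mul, L1.norm_eq_integral_norm]
        _ = ↑‖φ‖₊ * ‖h₁ - h₂‖ := by rw [coe_nnnorm]
    exact isClosed_eq φ.continuous cont


end
section


variable {X : Type*} [MeasurableSpace X]

lemma tvDist_le {ν₁ ν₂ : Measure X} {b : ℝ} (hb : 0 ≤ b)
    (h : ∀ A : Set X, MeasurableSet A → |(ν₁ A).toReal - (ν₂ A).toReal| ≤ b) :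
    tvDist ν₁ ν₂ ≤ b :=
  Real.iSup_le (fun A => h A.1 A.2) hb

lemma tvDist_apply_lt {ν₁ ν₂ : Measure X} [IsFiniteMeasure ν₁] [IsFiniteMeasure ν₂] {ε : ℝ}
    (h : tvDist ν₁ ν₂ < ε) {A : Set X} (hA : MeasurableSet A) :
    |(ν₁ A).toReal - (ν₂ A).toReal| < ε := by
  unfold tvDist at h
  refine lt_of_le_of_lt (le_ciSup (f := fun B : {B : Set X // MeasurableSet B} => |(ν₁ B.1).toReal - (ν₂ B.1).toReal|) ?_ ⟨A, hA⟩) h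
  refine ⟨(ν₁ univ).toReal + (ν₂ univ).toReal, ?_⟩
  rintro y ⟨⟨B, hB⟩, rfl⟩
  refine (abs_sub _ _).trans ?_
  gcongr
  · rw [abs_of_nonneg ENNReal.toReal_nonneg]
    exact ENNReal.toReal_mono (measure_ne_top _ _) (measure_mono (subset_univ B))
  · rw [abs_of_nonneg ENNReal.toReal_nonneg]
    exact ENNReal.toReal_mono (measure_ne_top _ _) (measure_mono (subset_univ B))

/-- essSup bound for real valued functions -/
lemma essSup_le_real {ν : Measure X} [IsProbabilityMeasure ν] {f : X → ℝ} {a C : ℝ}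
    (hC : ∀ x, -C ≤ f x) (h : ∀ᵐ x ∂ν, f x ≤ a) : essSup f ν ≤ a := by
  haveI : (ae ν).NeBot := MeasureTheory.ae_neBot.2 (IsProbabilityMeasure.ne_zero ν)
  have hbd : IsBoundedUnder (· ≥ ·) (ae ν) f :=
    isBoundedUnder_of_eventually_ge (Eventually.of_forall hC)
  exact Filter.limsup_le_of_le hbd.isCoboundedUnder_le h

variable {G : Type*} [Group G] [MeasurableSpace G] [MulAction G X]

section forward

variable (hact : Measurable fun q : G × X => q.1 • q.2)
  (ν : Measure X) [IsProbabilityMeasure ν]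

include hact

/-- key step of the forward direction -/
lemma fwd_aux (hSAT : IsSAT G ν) {f : X → ℝ} (hf : Measurable f) {C : ℝ}
    (hC : ∀ x, |f x| ≤ C) {a : ℝ} (hA : ν {x | a < f x} ≠ 0) :
    a ≤ ⨆ g : G, |∫ x, f (g • x) ∂ν| := by
  have hC0 : 0 ≤ C := by
    obtain ⟨x⟩ : Nonempty X := by
      by_contra hX
      rw [not_nonempty_iff] at hX
      exact (IsProbabilityMeasure.ne_zero ν) (Measure.eq_zero_of_isEmpty ν)
    exact (abs_nonneg (f x)).trans (hC x)
  -- the sup is bounded above by C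
  have hb : ∀ g : G, |∫ x, f (g • x) ∂ν| ≤ C := by
    intro g
    calc |∫ x, f (g • x) ∂ν| = ‖∫ x, f (g • x) ∂ν‖ := rfl
      _ ≤ ∫ x, ‖f (g • x)‖ ∂ν := norm_integral_le_integral_norm _
      _ ≤ ∫ _x, C ∂ν := by
          refine integral_mono ?_ (integrable_const C) fun x => by
            rw [Real.norm_eq_abs]; exact hC _
          refine (integrable_const C).mono'
            ((hf.comp (hact.comp (measurable_const.prodMk measurable_id) : Measurable fun x : X => g • x)).norm.aestronglyMeasurable) ?_
          exact Eventually.of_forall fun x => by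
            rw [norm_norm, Real.norm_eq_abs]; exact hC _
      _ = C := by simp
  have hbdd : BddAbove (Set.range fun g : G => |∫ x, f (g • x) ∂ν|) :=
    ⟨C, by rintro y ⟨g, rfl⟩; exact hb g⟩
  have hS0 : 0 ≤ ⨆ g : G, |∫ x, f (g • x) ∂ν| :=
    le_trans (abs_nonneg _) (le_ciSup hbdd 1)
  rcases le_or_gt a (-C) with hneg | hpos
  · exact hneg.trans ((neg_nonpos.2 hC0).trans hS0)
  -- main case
  refine le_of_forall_pos_le_add fun η hη => ?_
  set A := {x | a < f x} with hAdef
  have hAm : MeasurableSet A := measurableSet_lt measurable_const hf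
  set lam : Measure X := (ν A)⁻¹ • ν.restrict A with hlam
  have hνA_ne : ν A ≠ 0 := hA
  have hνA_top : ν A ≠ ⊤ := measure_ne_top _ _
  haveI hlamP : IsProbabilityMeasure lam := by
    constructor
    rw [hlam, Measure.smul_apply, Measure.restrict_apply MeasurableSet.univ, univ_inter,
      smul_eq_mul, ENNReal.inv_mul_cancel hνA_ne hνA_top]
  have hlamac : lam ≪ ν :=
    Measure.smul_absolutelyContinuous.trans
      (Measure.absolutelyContinuous_of_le Measure.restrict_le_self)
  set δ : ℝ := min (η / (2 * C + 1)) (1 / 2) with hδdef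
  have hδ0 : 0 < δ := lt_min (div_pos hη (by linarith)) (by norm_num)
  obtain ⟨μ, hμP, hμtv⟩ := hSAT lam hlamP hlamac δ hδ0
  set κ := convAct μ ν with hκ
  haveI : IsProbabilityMeasure (μ.prod ν) := by infer_instance
  haveI hκP : IsProbabilityMeasure κ := Measure.isProbabilityMeasure_map hact.aemeasurable
  have hlamA : lam A = 1 := by
    rw [hlam, Measure.smul_apply, Measure.restrict_apply hAm, inter_self, smul_eq_mul,
      ENNReal.inv_mul_cancel hνA_ne hνA_top]
  set t : ℝ := (κ A).toReal with ht
  have htle : t ≤ 1 := by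
    rw [ht]
    exact ENNReal.toReal_le_of_le_ofReal one_pos.le (by simpa using prob_le_one)
  have ht1 : 1 - δ < t := by
    have := tvDist_apply_lt hμtv hAm
    rw [hlamA] at this
    simp only [ENNReal.toReal_one] at this
    have := abs_lt.1 this
    linarith [this.1]
  have hκint : Integrable f κ := by
    refine (integrable_const C).mono' hf.aestronglyMeasurable ?_
    exact Eventually.of_forall fun x => by rw [Real.norm_eq_abs]; exact hC x
  -- lower bound for ∫ f dκ
  have hlow : a * t - C * (1 - t) ≤ ∫ x, f x ∂κ := by
    rw [← integral_add_compl hAm hκint]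
    have h1 : a * t ≤ ∫ x in A, f x ∂κ := by
      have := setIntegral_ge_of_const_le hAm (measure_ne_top κ A)
        (fun x hx => le_of_lt hx) hκint.integrableOn
      rw [smul_eq_mul, mul_comm] at this
      exact this
    have h2 : -(C * (1 - t)) ≤ ∫ x in Aᶜ, f x ∂κ := by
      have hcompl : (κ Aᶜ).toReal = 1 - t := by
        rw [measure_compl hAm (measure_ne_top _ _), measure_univ,
          ENNReal.toReal_sub_of_le prob_le_one ENNReal.one_ne_top, ENNReal.toReal_one]
      have := setIntegral_ge_of_const_le hAm.compl (measure_ne_top κ Aᶜ)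
        (fun x _ => (abs_le.1 (hC x)).1) hκint.integrableOn
      rw [measureReal_def, hcompl, smul_eq_mul, mul_comm] at this
      calc -(C * (1 - t)) = -C * (1 - t) := by ring
        _ ≤ ∫ x in Aᶜ, f x ∂κ := this
    linarith
  -- upper bound for ∫ f dκ
  have hup : ∫ x, f x ∂κ ≤ ⨆ g : G, |∫ x, f (g • x) ∂ν| := by
    have hmap : ∫ x, f x ∂κ = ∫ p : G × X, f (p.1 • p.2) ∂(μ.prod ν) := by
      rw [hκ, convAct, integral_map hact.aemeasurable hf.aestronglyMeasurable]
    have hintprod : Integrable (fun p : G × X => f (p.1 • p.2)) (μ.prod ν) := by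
      refine (integrable_const C).mono' (hf.comp hact).aestronglyMeasurable ?_
      exact Eventually.of_forall fun p => by rw [Real.norm_eq_abs]; exact hC _
    rw [hmap, integral_prod _ hintprod]
    have hinner_meas : StronglyMeasurable fun g : G => ∫ x, f (g • x) ∂ν :=
      (hf.comp hact).stronglyMeasurable.integral_prod_right'
    refine le_trans (integral_mono ?_ (integrable_const _) fun g =>
      le_trans (le_abs_self _) (le_ciSup hbdd g)) ?_
    · refine (integrable_const C).mono' hinner_meas.aestronglyMeasurable ?_
      refine Eventually.of_forall fun g => ?_
      rw [Real.norm_eq_abs]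
      exact hb g
    · simp
  -- combine
  have hδη : C * (1 - t) + |a| * (1 - t) ≤ η := by
    have h1t : 0 ≤ 1 - t := by linarith
    have h1t' : 1 - t ≤ δ := by linarith
    have haC : |a| ≤ C := abs_le.2 ⟨hpos.le, by
      obtain ⟨x, hx⟩ := nonempty_of_measure_ne_zero hA
      exact le_of_lt (lt_of_lt_of_le hx ((abs_le.1 (hC x)).2))⟩
    have : C * (1 - t) + |a| * (1 - t) ≤ (2 * C) * δ := by nlinarith
    refine this.trans ?_
    have hδ1 : δ ≤ η / (2 * C + 1) := min_le_left _ _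
    calc (2 * C) * δ ≤ (2 * C + 1) * (η / (2 * C + 1)) := by nlinarith
      _ = η := by field_simp
  have : a - (C * (1 - t) + |a| * (1 - t)) ≤ a * t - C * (1 - t) := by
    have : a * t = a - a * (1 - t) := by ring
    rw [this]
    have := neg_abs_le a
    nlinarith [le_abs_self a]
  linarith [hlow.trans hup]

end forward


end
section


variable {X : Type*} [MeasurableSpace X]
variable {G : Type*} [Group G] [MeasurableSpace G] [MulAction G X]

variable (hact : Measurable fun q : G × X => q.1 • q.2)
  (ν : Measure X) [IsProbabilityMeasure ν]

include hact

lemma forward (hqi : ∀ g : G, Measure.map (fun x => g • x) ν ≪ ν) (hSAT : IsSAT G ν)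
    {f : X → ℝ} (hf : Measurable f) {C : ℝ} (hC : ∀ x, |f x| ≤ C) :
    (⨆ g : G, |∫ x, f (g • x) ∂ν|) = essSup (fun x => |f x|) ν := by
  set M := essSup (fun x => |f x|) ν with hM
  have hfae : ∀ᵐ x ∂ν, |f x| ≤ M :=
    ae_le_essSup (isBoundedUnder_of_eventually_le (Eventually.of_forall hC))
  have hb : ∀ g : G, |∫ x, f (g • x) ∂ν| ≤ M := by
    intro g
    have hsm : Measurable fun x : X => g • x :=
      hact.comp (measurable_const.prodMk measurable_id)
    haveI : IsProbabilityMeasure (Measure.map (fun x : X => g • x) ν) :=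
      Measure.isProbabilityMeasure_map hsm.aemeasurable
    have hmap : ∫ x, f (g • x) ∂ν = ∫ y, f y ∂(Measure.map (fun x : X => g • x) ν) :=
      (integral_map hsm.aemeasurable hf.aestronglyMeasurable).symm
    have hae2 : ∀ᵐ y ∂(Measure.map (fun x : X => g • x) ν), |f y| ≤ M := (hqi g).ae_le hfae
    have hint : Integrable f (Measure.map (fun x : X => g • x) ν) := by
      refine (integrable_const C).mono' hf.aestronglyMeasurable ?_
      exact Eventually.of_forall fun x => by rw [Real.norm_eq_abs]; exact hC x
    rw [hmap, ← Real.norm_eq_abs]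
    calc ‖∫ y, f y ∂(Measure.map (fun x : X => g • x) ν)‖
        ≤ ∫ y, ‖f y‖ ∂(Measure.map (fun x : X => g • x) ν) := norm_integral_le_integral_norm _
      _ ≤ ∫ _y, M ∂(Measure.map (fun x : X => g • x) ν) := by
          refine integral_mono_ae hint.norm (integrable_const M) ?_
          filter_upwards [hae2] with y hy
          rw [Real.norm_eq_abs]; exact hy
      _ = M := by simp
  have hM0 : 0 ≤ M := (abs_nonneg _).trans (hb 1)
  refine le_antisymm (Real.iSup_le hb hM0) ?_
  refine le_of_forall_pos_le_add fun ε hε => ?_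
  have hU : ν {x | M - ε < |f x|} ≠ 0 := by
    intro h0
    have hae : ∀ᵐ x ∂ν, |f x| ≤ M - ε := by
      rw [ae_iff]
      convert h0 using 2
      ext x
      simp [not_le]
    have : M ≤ M - ε :=
      essSup_le_real (C := 0) (fun x => by rw [neg_zero]; exact abs_nonneg (f x)) hae
    linarith
  have hsplit : {x | M - ε < |f x|} ⊆ {x | M - ε < f x} ∪ {x | M - ε < -f x} :=
    fun x hx => by
      rcases lt_abs.1 (show M - ε < |f x| from hx) with h | h
      · exact Or.inl h
      · exact Or.inr h
  have hcases : ν {x | M - ε < f x} ≠ 0 ∨ ν {x | M - ε < -f x} ≠ 0 := by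
    by_contra hc
    push_neg at hc
    exact hU (measure_mono_null hsplit
      (measure_union_null hc.1 hc.2))
  rcases hcases with h | h
  · have := fwd_aux hact ν hSAT hf hC h
    linarith
  · have h2 := fwd_aux hact ν hSAT (f := fun x => -f x) hf.neg
      (C := C) (fun x => by rw [abs_neg]; exact hC x) h
    have he : (⨆ g : G, |∫ x, (fun y => -f y) (g • x) ∂ν|)
        = ⨆ g : G, |∫ x, f (g • x) ∂ν| := by
      congr 1
      funext g
      rw [show (fun x => (fun y => -f y) (g • x)) = fun x => -(f (g • x)) from rfl]
      rw [integral_neg, abs_neg]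
    rw [he] at h2
    linarith


end
section


variable {X : Type*} [MeasurableSpace X] (ν : Measure X) [IsProbabilityMeasure ν]

lemma int_bdd {κ : Measure X} [IsFiniteMeasure κ] {f : X → ℝ} {C : ℝ}
    (hm : AEStronglyMeasurable f κ) (hC : ∀ x, |f x| ≤ C) : Integrable f κ :=
  (integrable_const C).mono' hm (Eventually.of_forall fun x => by
    rw [Real.norm_eq_abs]; exact hC x)

lemma coeFn_finset_sum {ι : Type*} (s : Finset ι) (v : ι → Lp ℝ 1 ν) (v0 : ι → X → ℝ)
    (h : ∀ i ∈ s, ⇑(v i) =ᵐ[ν] v0 i) :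
    ⇑(∑ i ∈ s, v i) =ᵐ[ν] fun x => ∑ i ∈ s, v0 i x := by
  classical
  induction s using Finset.induction with
  | empty => simp only [Finset.sum_empty]; exact Lp.coeFn_zero ℝ 1 ν
  | @insert a s ha ih =>
      rw [Finset.sum_insert ha]
      have ih' := ih fun i hi => h i (Finset.mem_insert_of_mem hi)
      filter_upwards [Lp.coeFn_add (v a) (∑ i ∈ s, v i), ih',
        h a (Finset.mem_insert_self a s)] with x h1 h2 h3
      rw [h1, Pi.add_apply, h2, h3, Finset.sum_insert ha]

variable {G : Type*} [Group G] [MeasurableSpace G] [MulAction G X]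
variable (hact : Measurable fun q : G × X => q.1 • q.2)

include hact

lemma reverse (hqi : ∀ g : G, Measure.map (fun x => g • x) ν ≪ ν)
    (hyp : ∀ f : X → ℝ, Measurable f → (∃ C : ℝ, ∀ x, |f x| ≤ C) →
      (⨆ g : G, |∫ x, f (g • x) ∂ν|) = essSup (fun x => |f x|) ν) :
    IsSAT G ν := by
  classical
  haveI : Nonempty G := ⟨1⟩
  intro lam hlamP hlamac ε hε
  have hsm : ∀ g : G, Measurable fun x : X => g • x := fun g =>
    hact.comp (measurable_const.prodMk measurable_id)
  haveI hPmap : ∀ g : G, IsProbabilityMeasure (Measure.map (fun x : X => g • x) ν) := fun g =>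
    Measure.isProbabilityMeasure_map (hsm g).aemeasurable
  -- densities
  set ρ0 : G → X → ℝ := fun g x => ((Measure.map (fun y : X => g • y) ν).rnDeriv ν x).toReal
    with hρ0
  have hρint : ∀ g : G, Integrable (ρ0 g) ν := fun g => Measure.integrable_toReal_rnDeriv
  set ρ : G → Lp ℝ 1 ν := fun g => (memLp_one_iff_integrable.2 (hρint g)).toLp (ρ0 g) with hρ
  have hρcoe : ∀ g : G, ⇑(ρ g) =ᵐ[ν] ρ0 g := fun g =>
    (memLp_one_iff_integrable.2 (hρint g)).coeFn_toLp
  set p0 : X → ℝ := fun x => (lam.rnDeriv ν x).toReal with hp0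
  have hpint : Integrable p0 ν := Measure.integrable_toReal_rnDeriv
  set pp : Lp ℝ 1 ν := (memLp_one_iff_integrable.2 hpint).toLp p0 with hpp
  have hpcoe : ⇑pp =ᵐ[ν] p0 := (memLp_one_iff_integrable.2 hpint).coeFn_toLp
  -- step 1 : pp lies in the closed convex hull of the densities
  have hpK : pp ∈ closure (convexHull ℝ (Set.range ρ)) := by
    by_contra hpK
    obtain ⟨φ, u, hu1, hu2⟩ :=
      geometric_hahn_banach_closed_point ((convex_convexHull ℝ _).closure) isClosed_closure hpK
    obtain ⟨d, hdm, hdb, hdrep⟩ := dual_repr ν φ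
    have hdgint : ∀ g : G, Integrable (fun x => d (g • x)) ν := fun g =>
      int_bdd (hdm.comp (hsm g)).aestronglyMeasurable (fun x => hdb _)
    have hφρ : ∀ g : G, φ (ρ g) = ∫ x, d (g • x) ∂ν := by
      intro g
      rw [hdrep]
      have h1 : ∫ x, d x * (ρ g : X → ℝ) x ∂ν
          = ∫ x, ((Measure.map (fun y : X => g • y) ν).rnDeriv ν x).toReal • d x ∂ν := by
        refine integral_congr_ae ?_
        filter_upwards [hρcoe g] with x hx
        rw [hx, smul_eq_mul, hρ0, mul_comm]
      rw [h1, integral_rnDeriv_smul (hqi g),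
        integral_map (hsm g).aemeasurable hdm.aestronglyMeasurable]
    have hφp : φ pp = ∫ x, d x ∂lam := by
      rw [hdrep]
      have h1 : ∫ x, d x * (pp : X → ℝ) x ∂ν
          = ∫ x, (lam.rnDeriv ν x).toReal • d x ∂ν := by
        refine integral_congr_ae ?_
        filter_upwards [hpcoe] with x hx
        rw [hx, smul_eq_mul, hp0, mul_comm]
      rw [h1, integral_rnDeriv_smul hlamac]
    -- the auxiliary nonnegative function
    set c : ℝ := ‖φ‖ + 1 with hc
    set F : X → ℝ := fun x => d x + c with hF
    have hFm : Measurable F := hdm.add measurable_const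
    have hFb : ∀ x, |F x| ≤ 2 * ‖φ‖ + 1 := fun x => by
      rw [hF]
      calc |d x + c| ≤ |d x| + |c| := abs_add_le _ _
        _ ≤ ‖φ‖ + (‖φ‖ + 1) := by
            refine add_le_add (hdb x) ?_
            rw [hc, abs_of_nonneg (by positivity)]
        _ = 2 * ‖φ‖ + 1 := by ring
    have hF1 : ∀ x, (0:ℝ) ≤ F x := fun x => by
      have := (abs_le.1 (hdb x)).1
      rw [hF]; simp only [hc]; linarith
    have hhyp := hyp F hFm ⟨2 * ‖φ‖ + 1, hFb⟩
    have hFg : ∀ g : G, ∫ x, F (g • x) ∂ν = (∫ x, d (g • x) ∂ν) + c := by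
      intro g
      rw [hF]
      simp only
      rw [integral_add (hdgint g) (integrable_const c), integral_const]
      simp
    have habs : ∀ g : G, |∫ x, F (g • x) ∂ν| = ∫ x, F (g • x) ∂ν := fun g =>
      abs_of_nonneg (integral_nonneg fun x => hF1 _)
    have hbddd : BddAbove (Set.range fun g : G => ∫ x, d (g • x) ∂ν) := by
      refine ⟨‖φ‖, ?_⟩
      rintro y ⟨g, rfl⟩
      refine le_trans (le_abs_self _) ?_
      rw [← Real.norm_eq_abs]
      refine le_trans (norm_integral_le_integral_norm _) ?_
      calc ∫ x, ‖d (g • x)‖ ∂ν ≤ ∫ _x, ‖φ‖ ∂ν := by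
            refine integral_mono (hdgint g).norm (integrable_const _) fun x => ?_
            rw [Real.norm_eq_abs]; exact hdb _
        _ = ‖φ‖ := by simp
    have key : essSup (fun x => |F x|) ν = (⨆ g : G, ∫ x, d (g • x) ∂ν) + c := by
      rw [← hhyp]
      have h6 : (fun g : G => |∫ x, F (g • x) ∂ν|)
          = fun g => (∫ x, d (g • x) ∂ν) + c := funext fun g => by rw [habs g, hFg g]
      rw [h6]
      exact (ciSup_add hbddd c).symm
    -- ∫ F dlam ≤ essSup
    have hFessae : ∀ᵐ x ∂ν, |F x| ≤ essSup (fun y => |F y|) ν :=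
      ae_le_essSup (isBoundedUnder_of_eventually_le (Eventually.of_forall hFb))
    have hdl : Integrable d lam := int_bdd hdm.aestronglyMeasurable hdb
    have h5 : ∫ x, d x ∂lam + c ≤ essSup (fun y => |F y|) ν := by
      have hFlam : Integrable F lam := int_bdd hFm.aestronglyMeasurable hFb
      have h51 : ∫ x, F x ∂lam = ∫ x, d x ∂lam + c := by
        rw [hF]
        simp only
        rw [integral_add hdl (integrable_const c), integral_const]
        simp
      have h52 : ∫ x, F x ∂lam ≤ essSup (fun y => |F y|) ν := by
        calc ∫ x, F x ∂lam ≤ ∫ _x, essSup (fun y => |F y|) ν ∂lam := by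
              refine integral_mono_ae hFlam (integrable_const _) ?_
              filter_upwards [hlamac.ae_le hFessae] with x hx
              exact (le_abs_self _).trans hx
          _ = essSup (fun y => |F y|) ν := by simp
      linarith
    have h8 : (⨆ g : G, ∫ x, d (g • x) ∂ν) ≤ u := by
      refine ciSup_le fun g => ?_
      rw [← hφρ g]
      exact (hu1 (ρ g) (subset_closure (subset_convexHull ℝ _ ⟨g, rfl⟩))).le
    rw [hφp] at hu2
    rw [key] at h5
    linarith
  -- step 2 : extract a finite convex combination within ε
  obtain ⟨q, hqH, hqd⟩ := Metric.mem_closure_iff.1 hpK ε hε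
  rw [convexHull_eq] at hqH
  obtain ⟨ι, t, w, z, hw0, hw1, hz, hq⟩ := hqH
  set g' : ι → G := fun i => if h : ∃ g : G, ρ g = z i then Classical.choose h else 1 with hg'
  have hg'z : ∀ i ∈ t, ρ (g' i) = z i := by
    intro i hi
    obtain ⟨g, hg⟩ := hz i hi
    rw [hg']
    simp only
    rw [dif_pos ⟨g, hg⟩]
    exact Classical.choose_spec (⟨g, hg⟩ : ∃ g : G, ρ g = z i)
  set μ : Measure G := ∑ i ∈ t, ENNReal.ofReal (w i) • Measure.dirac (g' i) with hμ
  haveI hμP : IsProbabilityMeasure μ := by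
    constructor
    rw [hμ, Measure.finset_sum_apply]
    have : ∀ i ∈ t, (ENNReal.ofReal (w i) • Measure.dirac (g' i)) univ
        = ENNReal.ofReal (w i) := by
      intro i hi
      rw [Measure.smul_apply, measure_univ, smul_eq_mul, mul_one]
    rw [Finset.sum_congr rfl this, ← ENNReal.ofReal_sum_of_nonneg hw0, hw1,
      ENNReal.ofReal_one]
  refine ⟨μ, hμP, lt_of_le_of_lt (tvDist_le dist_nonneg ?_) hqd⟩
  -- identify the convolution
  have hconv : ∀ {A : Set X}, MeasurableSet A →
      (convAct μ ν) A = ∑ i ∈ t, ENNReal.ofReal (w i)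
        * (Measure.map (fun x : X => g' i • x) ν) A := by
    intro A hA
    rw [convAct, Measure.map_apply hact hA, Measure.prod_apply (hact hA), hμ,
      lintegral_finset_sum_measure]
    refine Finset.sum_congr rfl fun i hi => ?_
    rw [lintegral_smul_measure,
      lintegral_dirac' _ (measurable_measure_prodMk_left (hact hA)),
      Measure.map_apply (hsm (g' i)) hA]
    rfl
  -- q as a function
  set qfun : X → ℝ := fun x => ∑ i ∈ t, w i * ρ0 (g' i) x with hqfun
  have hqint : Integrable qfun ν := by
    refine integrable_finset_sum t fun i _ => (hρint (g' i)).const_mul (w i)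
  have hqrep : q = ∑ i ∈ t, w i • ρ (g' i) := by
    rw [← hq, Finset.centerMass_eq_of_sum_1 _ _ hw1]
    exact (Finset.sum_congr rfl fun i hi => by rw [hg'z i hi]).symm
  have hqcoe : ⇑q =ᵐ[ν] qfun := by
    rw [hqrep]
    refine (coeFn_finset_sum ν t _ (fun i x => w i * ρ0 (g' i) x) fun i _ => ?_).trans ?_
    · filter_upwards [Lp.coeFn_smul (w i) (ρ (g' i)), hρcoe (g' i)] with x h1 h2
      rw [h1, Pi.smul_apply, h2, smul_eq_mul]
    · exact EventuallyEq.rfl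
  -- the distance identity
  have hdist : dist pp q = ∫ x, |p0 x - qfun x| ∂ν := by
    rw [dist_eq_norm, L1.norm_eq_integral_norm]
    refine integral_congr_ae ?_
    filter_upwards [Lp.coeFn_sub pp q, hpcoe, hqcoe] with x h1 h2 h3
    rw [h1, Pi.sub_apply, h2, h3, Real.norm_eq_abs]
  -- the pointwise set bound
  intro A hA
  have e1 : (lam A).toReal = ∫ x in A, p0 x ∂ν :=
    (Measure.setIntegral_toReal_rnDeriv hlamac A).symm
  have e2 : ((convAct μ ν) A).toReal = ∫ x in A, qfun x ∂ν := by
    rw [hconv hA, ENNReal.toReal_sum]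
    · have : ∀ i ∈ t, (ENNReal.ofReal (w i) * (Measure.map (fun x : X => g' i • x) ν) A).toReal
          = w i * ∫ x in A, ρ0 (g' i) x ∂ν := by
        intro i hi
        rw [ENNReal.toReal_mul, ENNReal.toReal_ofReal (hw0 i hi),
          Measure.setIntegral_toReal_rnDeriv (hqi (g' i)) A, measureReal_def]
      rw [Finset.sum_congr rfl this, hqfun]
      simp_rw [← integral_const_mul]
      rw [← integral_finset_sum]
      · exact fun i _ => ((hρint (g' i)).const_mul (w i)).integrableOn
    · intro i hi
      exact ENNReal.mul_ne_top ENNReal.ofReal_ne_top (measure_ne_top _ _)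
  rw [e1, e2, ← integral_sub hpint.integrableOn hqint.integrableOn, hdist]
  calc |∫ x in A, (p0 x - qfun x) ∂ν| ≤ ∫ x in A, |p0 x - qfun x| ∂ν := by
        rw [← Real.norm_eq_abs]
        refine (norm_integral_le_integral_norm _).trans ?_
        simp [Real.norm_eq_abs]
    _ ≤ ∫ x, |p0 x - qfun x| ∂ν :=
        setIntegral_le_integral (hpint.sub hqint).abs
          (Eventually.of_forall fun x => abs_nonneg _)


end

end SATaux

/-- a quasi-invariant probability measure `ν` is SAT if and only if for every
bounded measurable `f : X → ℝ`, `⨆ g, |∫ f(g • x) dν(x)| = esssup_ν |f|`. -/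
theorem stmt2
    {G X : Type*}
    [TopologicalSpace G] [Group G] [IsTopologicalGroup G]
    [LocallyCompactSpace G] [SecondCountableTopology G]
    [MeasurableSpace G] [BorelSpace G]
    [MeasurableSpace X] [MulAction G X]
    (hact : Measurable fun q : G × X => q.1 • q.2)
    (ν : Measure X) [IsProbabilityMeasure ν]
    (hqi : ∀ g : G, Measure.map (fun x => g • x) ν ≪ ν) :
    IsSAT G ν ↔
      ∀ f : X → ℝ, Measurable f → (∃ C : ℝ, ∀ x, |f x| ≤ C) →
        (⨆ g : G, |∫ x, f (g • x) ∂ν|) = essSup (fun x => |f x|) ν := by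
  constructor
  · rintro hSAT f hf ⟨C, hC⟩
    exact SATaux.forward hact ν hqi hSAT hf hC
  · intro hyp
    exact SATaux.reverse ν hact hqi hyp
end

section
/- Let G be a locally compact second-countable group acting jointly measurably on a measurable space X, and let ν be a SAT probability measure on X. Then the action is ergodic with respect to ν in the following sense: every bounded measurable function f : X → ℝ satisfying, for every g ∈ G, f(g • x) = f(x) for ν-almost every x ∈ X, is ν-almost everywhere equal to a constant. -/
open MeasureTheory

/-- Key lemma: for a SAT measure, every a.e.-invariant measurable set is null or conull. -/
lemma sat_zero_one {G X : Type*} [MeasurableSpace G] [MeasurableSpace X]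
    [Group G] [MulAction G X]
    (hact : Measurable fun q : G × X => q.1 • q.2)
    (ν : Measure X) [IsProbabilityMeasure ν] (hSAT : IsSAT G ν)
    (A : Set X) (hA : MeasurableSet A)
    (hAinv : ∀ g : G, ((fun x => g • x) ⁻¹' A : Set X) =ᵐ[ν] A) :
    ν A = 0 ∨ ν A = 1 := by
  by_contra hcon
  push_neg at hcon
  obtain ⟨h0, h1⟩ := hcon
  have hAle : ν A ≤ 1 := prob_le_one
  have hAlt : ν A < 1 := lt_of_le_of_ne hAle h1
  have hAne : ν A ≠ ⊤ := (lt_of_lt_of_le hAlt le_top).ne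
  set lam : Measure X := (ν A)⁻¹ • ν.restrict A with hlam
  have hlamA : lam A = 1 := by
    rw [hlam]
    simp only [Measure.smul_apply, smul_eq_mul, Measure.restrict_apply hA, Set.inter_self]
    exact ENNReal.inv_mul_cancel h0 hAne
  have hlamprob : IsProbabilityMeasure lam := by
    constructor
    rw [hlam]
    simp only [Measure.smul_apply, smul_eq_mul, Measure.restrict_apply MeasurableSet.univ,
      Set.univ_inter]
    exact ENNReal.inv_mul_cancel h0 hAne
  have hlamac : lam ≪ ν := by
    intro s hs
    have hr : ν.restrict A s = 0 :=
      le_antisymm (le_trans (Measure.restrict_apply_le A s) hs.le) zero_le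
    rw [hlam]
    simp [Measure.smul_apply, hr]
  have hε : (0:ℝ) < 1 - (ν A).toReal := by
    have h : (ν A).toReal < 1 := by
      have := (ENNReal.toReal_lt_toReal hAne ENNReal.one_ne_top).mpr hAlt
      simpa using this
    linarith
  obtain ⟨μ, hμprob, hlt⟩ := hSAT lam hlamprob hlamac _ hε
  -- compute (convAct μ ν) A = ν A
  have hmA : convAct μ ν A = ν A := by
    rw [convAct, Measure.map_apply hact hA, Measure.prod_apply (hact hA)]
    have : ∀ g : G, ν (Prod.mk g ⁻¹' ((fun p : G × X => p.1 • p.2) ⁻¹' A)) = ν A := by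
      intro g
      have : (Prod.mk g ⁻¹' ((fun p : G × X => p.1 • p.2) ⁻¹' A)) =
          ((fun x => g • x) ⁻¹' A : Set X) := rfl
      rw [this]
      exact measure_congr (hAinv g)
    rw [lintegral_congr this, lintegral_const, hμprob.measure_univ, mul_one]
  have hmprob : IsProbabilityMeasure (convAct μ ν) := by
    have : IsProbabilityMeasure (μ.prod ν) := by infer_instance
    exact Measure.isProbabilityMeasure_map hact.aemeasurable
  -- tvDist lower bound
  have hbdd : BddAbove (Set.range fun B : {B : Set X // MeasurableSet B} =>
      |(lam B.1).toReal - ((convAct μ ν) B.1).toReal|) := by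
    refine ⟨2, ?_⟩
    rintro _ ⟨B, rfl⟩
    have key : ∀ (m : Measure X) [IsProbabilityMeasure m] (s : Set X), (m s).toReal ≤ 1 := by
      intro m _ s
      have h : m s ≤ 1 := prob_le_one
      simpa using ENNReal.toReal_mono ENNReal.one_ne_top h
    have h1 : (lam B.1).toReal ≤ 1 := key lam B.1
    have h2 : ((convAct μ ν) B.1).toReal ≤ 1 := key (convAct μ ν) B.1
    have h3 : (0:ℝ) ≤ (lam B.1).toReal := ENNReal.toReal_nonneg
    have h4 : (0:ℝ) ≤ ((convAct μ ν) B.1).toReal := ENNReal.toReal_nonneg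
    rw [abs_sub_le_iff]
    constructor <;> linarith
  have hle : |(lam A).toReal - ((convAct μ ν) A).toReal| ≤ tvDist lam (convAct μ ν) :=
    le_ciSup hbdd ⟨A, hA⟩
  rw [hlamA, hmA, ENNReal.toReal_one] at hle
  rw [abs_of_nonneg (by linarith : (0:ℝ) ≤ 1 - (ν A).toReal)] at hle
  linarith

/-- a SAT probability measure is ergodic: every bounded measurable
`G`-invariant (a.e., for each group element) real function is a.e. constant. -/
theorem stmt3
    {G X : Type*}
    [TopologicalSpace G] [Group G] [IsTopologicalGroup G]
    [LocallyCompactSpace G] [SecondCountableTopology G]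
    [MeasurableSpace G] [BorelSpace G]
    [MeasurableSpace X] [MulAction G X]
    (hact : Measurable fun q : G × X => q.1 • q.2)
    (ν : Measure X) [IsProbabilityMeasure ν]
    (hSAT : IsSAT G ν)
    (f : X → ℝ) (hf : Measurable f) (hbd : ∃ C : ℝ, ∀ x, |f x| ≤ C)
    (hinv : ∀ g : G, ∀ᵐ x ∂ν, f (g • x) = f x) :
    ∃ c : ℝ, ∀ᵐ x ∂ν, f x = c := by
  obtain ⟨C, hC⟩ := hbd
  -- dichotomy for the superlevel sets
  have dich : ∀ t : ℝ, ν {x | t < f x} = 0 ∨ ν {x | t < f x} = 1 := by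
    intro t
    refine sat_zero_one hact ν hSAT _ (measurableSet_lt measurable_const hf) ?_
    intro g
    rw [Filter.eventuallyEq_set]
    filter_upwards [hinv g] with x hx
    simp only [Set.mem_preimage, Set.mem_setOf_eq, hx]
  set S : Set ℝ := {t | ν {x | t < f x} = 0} with hS
  have hCmem : C ∈ S := by
    have : {x | C < f x} = (∅ : Set X) := by
      ext x
      simp only [Set.mem_setOf_eq, Set.mem_empty_iff_false, iff_false, not_lt]
      exact le_trans (le_abs_self _) (hC x)
    simp [hS, this]
  have hSne : S.Nonempty := ⟨C, hCmem⟩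
  have hSbdd : BddBelow S := by
    refine ⟨-C - 1, fun t ht => ?_⟩
    by_contra hcon
    push_neg at hcon
    have : {x | t < f x} = (Set.univ : Set X) := by
      ext x
      simp only [Set.mem_setOf_eq, Set.mem_univ, iff_true]
      have := (abs_le.mp (hC x)).1
      linarith
    rw [hS, Set.mem_setOf_eq, this] at ht
    simp at ht
  set c : ℝ := sInf S with hc
  refine ⟨c, ?_⟩
  have hS0 : ∀ t : ℝ, c < t → ν {x | t < f x} = 0 := by
    intro t ht
    obtain ⟨s, hsS, hst⟩ := (csInf_lt_iff hSbdd hSne).mp ht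
    exact measure_mono_null (fun x hx => lt_trans hst hx) hsS
  have hS1 : ∀ t : ℝ, t < c → ν {x | t < f x} = 1 := by
    intro t ht
    rcases dich t with h | h
    · exact absurd (csInf_le hSbdd h) (not_le.mpr ht)
    · exact h
  have hgt : ν {x | c < f x} = 0 := by
    have hsub : {x | c < f x} ⊆ ⋃ n : ℕ, {x | c + 1 / (n + 1) < f x} := by
      intro x hx
      obtain ⟨n, hn⟩ := exists_nat_one_div_lt (ε := f x - c) (sub_pos.mpr hx)
      exact Set.mem_iUnion.mpr ⟨n, by simp only [Set.mem_setOf_eq]; linarith⟩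
    refine measure_mono_null hsub (measure_iUnion_null fun n => hS0 _ ?_)
    have : (0:ℝ) < 1 / (n + 1) := by positivity
    linarith
  have hlt : ν {x | f x < c} = 0 := by
    have hsub : {x | f x < c} ⊆ ⋃ n : ℕ, {x | f x ≤ c - 1 / (n + 1)} := by
      intro x hx
      obtain ⟨n, hn⟩ := exists_nat_one_div_lt (ε := c - f x) (sub_pos.mpr hx)
      exact Set.mem_iUnion.mpr ⟨n, by simp only [Set.mem_setOf_eq]; linarith⟩
    refine measure_mono_null hsub (measure_iUnion_null fun n => ?_)
    have h1 : ν {x | c - 1 / (n + 1) < f x} = 1 := by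
      refine hS1 _ ?_
      have : (0:ℝ) < 1 / (n + 1) := by positivity
      linarith
    have hcompl : {x | f x ≤ c - 1 / (n + 1)} = {x | c - 1 / (n + 1) < f x}ᶜ := by
      ext x; simp [not_lt]
    rw [hcompl, measure_compl (measurableSet_lt measurable_const hf) (measure_ne_top ν _),
      measure_univ, h1, tsub_self]
  rw [Filter.eventually_iff, mem_ae_iff]
  have : {x | f x = c}ᶜ ⊆ {x | c < f x} ∪ {x | f x < c} := by
    intro x hx
    rcases lt_trichotomy (f x) c with h | h | h
    · exact Or.inr h
    · exact absurd h hx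
    · exact Or.inl h
  exact measure_mono_null this (le_antisymm
    (le_trans (measure_union_le _ _) (by rw [hgt, hlt]; simp)) zero_le)
end

section
/- Let G be a locally compact second-countable group acting jointly measurably on a measurable space X, and let ν be a SAT probability measure on X. Then every measurable set A ⊆ X satisfying ν(A Δ (g⁻¹ • A)) = 0 for every g ∈ G (where g⁻¹ • A = {x ∈ X : g • x ∈ A} and Δ denotes symmetric difference) has ν(A) = 0 or ν(A) = 1. -/
open MeasureTheory

/-- a SAT probability measure is ergodic in the set-theoretic sense:
every measurable set that is a.e. invariant under every group element has measure 0 or 1. -/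
theorem stmt4
    {G X : Type*}
    [TopologicalSpace G] [Group G] [IsTopologicalGroup G]
    [LocallyCompactSpace G] [SecondCountableTopology G]
    [MeasurableSpace G] [BorelSpace G]
    [MeasurableSpace X] [MulAction G X]
    (hact : Measurable fun q : G × X => q.1 • q.2)
    (ν : Measure X) [IsProbabilityMeasure ν]
    (hSAT : IsSAT G ν)
    (A : Set X) (hA : MeasurableSet A)
    (hinv : ∀ g : G, ν (symmDiff A ((fun x => g • x) ⁻¹' A)) = 0) :
    ν A = 0 ∨ ν A = 1 := by
  rcases eq_or_ne (ν A) 0 with h0 | h0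
  · exact Or.inl h0
  right
  have hAtop : ν A ≠ ⊤ := (measure_lt_top ν A).ne
  -- conditional measure on A
  set lam : Measure X := (ν A)⁻¹ • ν.restrict A with hlam_def
  have hlamA : lam A = 1 := by
    simp [hlam_def, Measure.restrict_apply hA, Set.inter_self,
      ENNReal.inv_mul_cancel h0 hAtop]
  haveI hlamprob : IsProbabilityMeasure lam := ⟨by
    simp [hlam_def, Measure.restrict_apply_univ, ENNReal.inv_mul_cancel h0 hAtop]⟩
  have hac : lam ≪ ν := by
    intro s hs
    have : ν (s ∩ A) = 0 := measure_mono_null Set.inter_subset_left hs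
    simp [hlam_def, Measure.restrict_apply' hA, this]
  -- conv of any prob measure with ν gives ν A on A
  have hconv : ∀ μ : Measure G, IsProbabilityMeasure μ → convAct μ ν A = ν A := by
    intro μ hμ
    rw [convAct, Measure.map_apply hact hA, Measure.prod_apply (hact hA)]
    have : ∀ g : G, ν (Prod.mk g ⁻¹' ((fun p : G × X => p.1 • p.2) ⁻¹' A)) = ν A := by
      intro g
      have hae : ((fun x : X => g • x) ⁻¹' A) =ᵐ[ν] A :=
        (MeasureTheory.measure_symmDiff_eq_zero_iff.mp (hinv g)).symm
      have : (Prod.mk g ⁻¹' ((fun p : G × X => p.1 • p.2) ⁻¹' A))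
          = (fun x : X => g • x) ⁻¹' A := rfl
      rw [this, measure_congr hae]
    simp only [this]
    simp
  have key : ∀ ε : ℝ, 0 < ε → |1 - (ν A).toReal| < ε := by
    intro ε hε
    obtain ⟨μ, hμ, hlt⟩ := hSAT lam hlamprob hac ε hε
    haveI : IsProbabilityMeasure (convAct μ ν) :=
      Measure.isProbabilityMeasure_map hact.aemeasurable
    have hbdd : BddAbove (Set.range fun A : {A : Set X // MeasurableSet A} =>
        |(lam A.1).toReal - ((convAct μ ν) A.1).toReal|) := by
      refine ⟨1, ?_⟩
      rintro x ⟨⟨s, hs⟩, rfl⟩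
      have h1 : (lam s).toReal ≤ 1 := by
        have := prob_le_one (μ := lam) (s := s)
        simpa using ENNReal.toReal_le_of_le_ofReal zero_le_one (by simpa using this)
      have h2 : ((convAct μ ν) s).toReal ≤ 1 := by
        have := prob_le_one (μ := convAct μ ν) (s := s)
        simpa using ENNReal.toReal_le_of_le_ofReal zero_le_one (by simpa using this)
      have h3 : 0 ≤ (lam s).toReal := ENNReal.toReal_nonneg
      have h4 : 0 ≤ ((convAct μ ν) s).toReal := ENNReal.toReal_nonneg
      rw [abs_sub_le_iff]
      constructor <;> linarith
    have hle : |(lam A).toReal - ((convAct μ ν) A).toReal| ≤ tvDist lam (convAct μ ν) :=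
      le_ciSup hbdd ⟨A, hA⟩
    rw [hlamA, hconv μ hμ] at hle
    simpa using lt_of_le_of_lt hle hlt
  have habs : |1 - (ν A).toReal| = 0 := by
    by_contra h
    have hpos : 0 < |1 - (ν A).toReal| :=
      lt_of_le_of_ne (abs_nonneg _) (Ne.symm h)
    exact absurd (key _ hpos) (lt_irrefl _)
  have htr : (ν A).toReal = 1 := by
    have := abs_eq_zero.mp habs
    linarith
  rw [← ENNReal.ofReal_toReal hAtop, htr]
  simp
end

section
/- Let G be a locally compact second-countable group acting jointly measurably on a measurable space X, and let ν be a SAT probability measure on X. Then for every measurable set A ⊆ X with ν(A) > 0 one has sup_{g ∈ G} ν(g⁻¹ • A) = 1, where g⁻¹ • A = {x ∈ X : g • x ∈ A}. -/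
open MeasureTheory

/-- contractibility of SAT measures along group elements: for every set `A`
with `ν A > 0` one has `⨆ g, ν (g⁻¹ • A) = 1`. -/
theorem stmt6
    {G X : Type*}
    [TopologicalSpace G] [Group G] [IsTopologicalGroup G]
    [LocallyCompactSpace G] [SecondCountableTopology G]
    [MeasurableSpace G] [BorelSpace G]
    [MeasurableSpace X] [MulAction G X]
    (hact : Measurable fun q : G × X => q.1 • q.2)
    (ν : Measure X) [IsProbabilityMeasure ν]
    (hSAT : IsSAT G ν)
    (A : Set X) (hA : MeasurableSet A) (hpos : 0 < ν A) :
    (⨆ g : G, (ν ((fun x => g • x) ⁻¹' A)).toReal) = 1 := by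

  set S := ⨆ g : G, (ν ((fun x => g • x) ⁻¹' A)).toReal with hSdef
  have hub : ∀ g : G, (ν ((fun x => g • x) ⁻¹' A)).toReal ≤ 1 := by
    intro g
    have h1 : ν ((fun x => g • x) ⁻¹' A) ≤ 1 := prob_le_one
    exact ENNReal.toReal_le_of_le_ofReal zero_le_one (by simpa using h1)
  have hbdd : BddAbove (Set.range fun g : G => (ν ((fun x => g • x) ⁻¹' A)).toReal) :=
    ⟨1, by rintro _ ⟨g, rfl⟩; exact hub g⟩
  have hS1 : S ≤ 1 := ciSup_le hub
  have hS0 : 0 ≤ S := le_trans ENNReal.toReal_nonneg (le_ciSup hbdd 1)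
  -- the normalized restriction of ν to A
  set lam : Measure X := (ν A)⁻¹ • ν.restrict A with hlamdef
  have hAne : ν A ≠ 0 := hpos.ne'
  have hAfin : ν A ≠ ⊤ := measure_ne_top ν A
  have hlamA : lam A = 1 := by
    rw [hlamdef, Measure.smul_apply, Measure.restrict_apply hA, Set.inter_self,
      smul_eq_mul, ENNReal.inv_mul_cancel hAne hAfin]
  have hlamprob : IsProbabilityMeasure lam := by
    constructor
    rw [hlamdef, Measure.smul_apply, Measure.restrict_apply MeasurableSet.univ,
      Set.univ_inter, smul_eq_mul, ENNReal.inv_mul_cancel hAne hAfin]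
  have hac : lam ≪ ν := by
    intro s hs
    have h1 : ν.restrict A s = 0 := le_antisymm (le_trans (Measure.restrict_le_self s) hs.le)
      bot_le
    rw [hlamdef, Measure.smul_apply, h1, smul_eq_mul, mul_zero]
  refine le_antisymm hS1 ?_
  refine le_of_forall_pos_le_add ?_
  intro ε hε
  obtain ⟨μ, hμprob, htv⟩ := hSAT lam hlamprob hac ε hε
  haveI := hμprob
  -- the convolution evaluated at A
  have hconvA : convAct μ ν A = ∫⁻ g, ν ((fun x => g • x) ⁻¹' A) ∂μ := by
    rw [convAct, Measure.map_apply hact hA, Measure.prod_apply (hact hA)]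
    rfl
  have hle : convAct μ ν A ≤ ENNReal.ofReal S := by
    rw [hconvA]
    calc ∫⁻ g, ν ((fun x => g • x) ⁻¹' A) ∂μ
        ≤ ∫⁻ _, ENNReal.ofReal S ∂μ := by
          refine lintegral_mono fun g => ?_
          exact (ENNReal.le_ofReal_iff_toReal_le (measure_ne_top ν _) hS0).2 (le_ciSup hbdd g)
      _ = ENNReal.ofReal S := by simp
  have htoReal : (convAct μ ν A).toReal ≤ S := by
    have := ENNReal.toReal_mono ENNReal.ofReal_ne_top hle
    rwa [ENNReal.toReal_ofReal hS0] at this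
  -- convAct μ ν is a probability measure
  have hconvuniv : convAct μ ν Set.univ = 1 := by
    rw [convAct, Measure.map_apply hact MeasurableSet.univ, Set.preimage_univ]
    exact measure_univ
  have hconvle : ∀ s : Set X, (convAct μ ν s).toReal ≤ 1 := by
    intro s
    have h1 : convAct μ ν s ≤ 1 := hconvuniv ▸ measure_mono (Set.subset_univ s)
    exact ENNReal.toReal_le_of_le_ofReal zero_le_one (by simpa using h1)
  have hlamle : ∀ s : Set X, (lam s).toReal ≤ 1 := by
    intro s
    have h1 : lam s ≤ 1 := prob_le_one
    exact ENNReal.toReal_le_of_le_ofReal zero_le_one (by simpa using h1)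
  have hterm : |(lam A).toReal - (convAct μ ν A).toReal| ≤ tvDist lam (convAct μ ν) := by
    have hbdd2 : BddAbove (Set.range fun A' : {A : Set X // MeasurableSet A} =>
        |(lam A'.1).toReal - (convAct μ ν A'.1).toReal|) := by
      refine ⟨2, ?_⟩
      rintro _ ⟨s, rfl⟩
      calc |(lam s.1).toReal - (convAct μ ν s.1).toReal|
          ≤ |(lam s.1).toReal| + |(convAct μ ν s.1).toReal| := abs_sub _ _
        _ ≤ 1 + 1 := by
            rw [abs_of_nonneg ENNReal.toReal_nonneg, abs_of_nonneg ENNReal.toReal_nonneg]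
            exact add_le_add (hlamle s.1) (hconvle s.1)
        _ = 2 := by norm_num
    exact le_ciSup hbdd2 (⟨A, hA⟩ : {A : Set X // MeasurableSet A})
  have hlt : |(lam A).toReal - (convAct μ ν A).toReal| < ε := lt_of_le_of_lt hterm htv
  rw [hlamA] at hlt
  simp only [ENNReal.toReal_one] at hlt
  have h1 : 1 - (convAct μ ν A).toReal < ε := lt_of_le_of_lt (le_abs_self _) hlt
  linarith
end

section
/- Let G be a locally compact second-countable group acting jointly measurably on measurable spaces X and Y, and let p : X → Y be a measurable G-equivariant map (p(g • x) = g • p(x) for all g ∈ G and x ∈ X). If ν is a SAT probability measure on X, then the pushforward p_*ν is a SAT probability measure on Y. -/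
open MeasureTheory

lemma tvDist_map_le {X Y : Type*} [MeasurableSpace X] [MeasurableSpace Y]
    (p : X → Y) (hp : Measurable p) (ν₁ ν₂ : Measure X)
    [IsFiniteMeasure ν₁] [IsFiniteMeasure ν₂] :
    tvDist (Measure.map p ν₁) (Measure.map p ν₂) ≤ tvDist ν₁ ν₂ := by
  have hbdd : BddAbove (Set.range fun A : {A : Set X // MeasurableSet A} =>
      |(ν₁ A.1).toReal - (ν₂ A.1).toReal|) := by
    refine ⟨(ν₁ Set.univ).toReal + (ν₂ Set.univ).toReal, ?_⟩
    rintro x ⟨A, rfl⟩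
    have h1 : (ν₁ A.1).toReal ≤ (ν₁ Set.univ).toReal :=
      ENNReal.toReal_mono (measure_ne_top _ _) (measure_mono (Set.subset_univ _))
    have h2 : (ν₂ A.1).toReal ≤ (ν₂ Set.univ).toReal :=
      ENNReal.toReal_mono (measure_ne_top _ _) (measure_mono (Set.subset_univ _))
    have h3 : (0:ℝ) ≤ (ν₁ A.1).toReal := ENNReal.toReal_nonneg
    have h4 : (0:ℝ) ≤ (ν₂ A.1).toReal := ENNReal.toReal_nonneg
    rw [abs_sub_le_iff]
    constructor <;> linarith
  have : Nonempty {A : Set Y // MeasurableSet A} := ⟨⟨∅, MeasurableSet.empty⟩⟩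
  apply ciSup_le
  intro A
  rw [Measure.map_apply hp A.2, Measure.map_apply hp A.2]
  exact le_ciSup hbdd ⟨p ⁻¹' A.1, hp A.2⟩

/-- the pushforward of a SAT probability measure under a measurable
`G`-equivariant map is again SAT. -/
theorem stmt8
    {G X Y : Type*}
    [TopologicalSpace G] [Group G] [IsTopologicalGroup G]
    [LocallyCompactSpace G] [SecondCountableTopology G]
    [MeasurableSpace G] [BorelSpace G]
    [MeasurableSpace X] [MulAction G X]
    (hactX : Measurable fun q : G × X => q.1 • q.2)
    [MeasurableSpace Y] [MulAction G Y]
    (hactY : Measurable fun q : G × Y => q.1 • q.2)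
    (p : X → Y) (hp : Measurable p)
    (hpeq : ∀ (g : G) (x : X), p (g • x) = g • p x)
    (ν : Measure X) [IsProbabilityMeasure ν]
    (hSAT : IsSAT G ν) :
    IsSAT G (Measure.map p ν) := by
  intro lam hlam hlamac ε hε
  have hmapν : IsProbabilityMeasure (Measure.map p ν) :=
    Measure.isProbabilityMeasure_map hp.aemeasurable
  set f := lam.rnDeriv (Measure.map p ν) with hf
  have hfm : Measurable f := lam.measurable_rnDeriv _
  set lam' := ν.withDensity (f ∘ p) with hlam'def
  have hrn : (Measure.map p ν).withDensity f = lam :=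
    Measure.withDensity_rnDeriv_eq _ _ hlamac
  have hmaplam' : Measure.map p lam' = lam := by
    rw [← hrn]
    ext A hA
    rw [Measure.map_apply hp hA, withDensity_apply _ (hp hA), withDensity_apply _ hA,
      setLIntegral_map hA hfm hp]
    rfl
  have hlam'prob : IsProbabilityMeasure lam' := by
    constructor
    have := congrArg (fun m : Measure Y => m Set.univ) hmaplam'
    simp only [Measure.map_apply hp MeasurableSet.univ, Set.preimage_univ] at this
    rw [this]
    exact hlam.measure_univ
  have hlam'ac : lam' ≪ ν := withDensity_absolutelyContinuous _ _
  obtain ⟨μ, hμ, htv⟩ := hSAT lam' hlam'prob hlam'ac ε hε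
  refine ⟨μ, hμ, ?_⟩
  have hconv : convAct μ (Measure.map p ν) = Measure.map p (convAct μ ν) := by
    unfold convAct
    have h1 : μ.prod (Measure.map p ν) = Measure.map (Prod.map id p) (μ.prod ν) := by
      have h := Measure.map_prod_map (f := id) (g := p) μ ν measurable_id hp
      rwa [Measure.map_id] at h
    rw [h1, Measure.map_map hactY (measurable_id.prodMap hp),
      Measure.map_map hp hactX]
    congr 1
    funext q
    exact (hpeq q.1 q.2).symm
  have hconvprob : IsProbabilityMeasure (convAct μ ν) :=
    Measure.isProbabilityMeasure_map hactX.aemeasurable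
  rw [hconv, ← hmaplam']
  exact lt_of_le_of_lt (tvDist_map_le p hp lam' (convAct μ ν)) htv
end
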